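/- arXiv:2209.09876 — 6 statements merged into one kernel-verified Lean document; each statement's English description precedes it below -/
import Mathlib

section
/- (Worpitzky Circle Theorem) Let D ⊆ ℂ be a domain and let (c_j)_{j≥0} be a sequence of analytic functions c_j : D → ℂ satisfying |c_j(z)| < 1/4 for every z ∈ D and every j ≥ 0. For n ≥ 0 define the n-th convergent f_n(z) = 1/(1 − c_0(z)/(1 − c_1(z)/(1 − ··· /(1 − c_n(z))))). Then the sequence (f_n) converges uniformly on every compact subset of D (to a limit function on D). -/
open Filter

/-- Finite continued fraction tail: `cfrac [c₀, c₁, …, cₙ] = c₀/(1 − c₁/(1 − ⋯/(1 − cₙ)))`. -/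
noncomputable def cfrac : List ℂ → ℂ
  | [] => 0
  | c :: s => c / (1 - cfrac s)

/-- The `n`-th convergent `fₙ(z) = 1/(1 − c₀(z)/(1 − c₁(z)/(1 − ⋯/(1 − cₙ(z)))))`. -/
noncomputable def cfConv (c : ℕ → ℂ → ℂ) (n : ℕ) (z : ℂ) : ℂ :=
  1 / (1 - cfrac (List.ofFn fun i : Fin (n + 1) => c i z))

/-! When every partial numerator has norm at most `1/4`, a tail `t` of length `m` satisfies
`‖t‖ ≤ m/(2(m+1))`, hence `‖1 - t‖ ≥ 1/2`. Since `a/(1-x) - a/(1-y) = a(x-y)/((1-x)(1-y))`,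
prefixing a numerator to a list of length `m` multiplies the effect of appending a last term by
at most `(m+1)/(m+3)`; the product telescopes to `‖fₙ₊₁(z) - fₙ(z)‖ ≤ 2/(n+2) - 2/(n+3)`, a bound
independent of `z`. So the convergents are uniformly Cauchy on all of `D`. -/

open Topology

section UniformLimits

variable {α β : Type*}

theorem UniformCauchySeqOn.exists_tendstoUniformlyOn [UniformSpace β] [CompleteSpace β]
    [Nonempty β] {F : ℕ → α → β} {s : Set α} (hF : UniformCauchySeqOn F atTop s) :
    ∃ f : α → β, TendstoUniformlyOn F f atTop s := by
  choose! f hf using fun z (hz : z ∈ s) => cauchySeq_tendsto_of_complete (hF.cauchySeq hz)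
  exact ⟨f, hF.tendstoUniformlyOn_of_tendsto hf⟩

theorem dist_le_sub_of_dist_succ_le_sub [PseudoMetricSpace β] {u : ℕ → β} {g : ℕ → ℝ}
    (h : ∀ k, dist (u k) (u (k + 1)) ≤ g k - g (k + 1)) {n m : ℕ} (hnm : n ≤ m) :
    dist (u n) (u m) ≤ g n - g m := by
  induction m, hnm using Nat.le_induction with
  | base => simp
  | succ m _ ih => linarith [dist_triangle (u n) (u m) (u (m + 1)), h m]

theorem uniformCauchySeqOn_of_dist_succ_le_sub [PseudoMetricSpace β] {F : ℕ → α → β}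
    {s : Set α} {g : ℕ → ℝ} (hg : Tendsto g atTop (𝓝 0))
    (hF : ∀ z ∈ s, ∀ k, dist (F k z) (F (k + 1) z) ≤ g k - g (k + 1)) :
    UniformCauchySeqOn F atTop s := by
  rw [Metric.uniformCauchySeqOn_iff]
  intro ε hε
  obtain ⟨N, hN⟩ := (hg.eventually (gt_mem_nhds (half_pos hε))).exists_forall_of_atTop
  refine ⟨N, fun m hm n hn z hz => ?_⟩
  have g_anti : Antitone g :=
    antitone_nat_of_succ_le fun k => by linarith [dist_nonneg.trans (hF z hz k)]
  have dist_le (k : ℕ) (hk : N ≤ k) : dist (F N z) (F k z) ≤ g N :=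
    (dist_le_sub_of_dist_succ_le_sub (hF z hz) hk).trans
      (sub_le_self _ (g_anti.le_of_tendsto hg k))
  calc dist (F m z) (F n z) ≤ dist (F N z) (F m z) + dist (F N z) (F n z) :=
        dist_triangle_left _ _ _
    _ < ε := by linarith [dist_le m hm, dist_le n hn, hN N le_rfl]

end UniformLimits

theorem div_one_sub_sub_div_one_sub {K : Type*} [Field K] {x y : K} (a : K) (hx : 1 - x ≠ 0)
    (hy : 1 - y ≠ 0) : a / (1 - x) - a / (1 - y) = a * (x - y) / ((1 - x) * (1 - y)) := by
  field_simp
  ring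

theorem le_norm_one_sub_of_norm_le {E : Type*} [SeminormedRing E] [NormOneClass E] {x : E}
    {m : ℝ} (hm : 0 ≤ m) (hx : ‖x‖ ≤ m / (2 * (m + 1))) : (m + 2) / (2 * (m + 1)) ≤ ‖1 - x‖ := by
  have h1 : (m + 2) / (2 * (m + 1)) = 1 - m / (2 * (m + 1)) := by field_simp; ring
  linarith [norm_sub_norm_le (1 : E) x, norm_one (α := E)]

theorem norm_cfrac_le : ∀ L : List ℂ, (∀ x ∈ L, ‖x‖ ≤ 1 / 4) →
    ‖cfrac L‖ ≤ L.length / (2 * (L.length + 1))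
  | [], _ => by simp [cfrac]
  | a :: L, h => by
    have ha : ‖a‖ ≤ 1 / 4 := h a List.mem_cons_self
    set m : ℝ := (L.length : ℝ)
    have hm : 0 ≤ m := Nat.cast_nonneg _
    have hden := le_norm_one_sub_of_norm_le hm (norm_cfrac_le L fun x hx => h x (.tail a hx))
    rw [cfrac, norm_div, List.length_cons, Nat.cast_succ]
    calc ‖a‖ / ‖1 - cfrac L‖ ≤ (1 / 4) / ((m + 2) / (2 * (m + 1))) := by gcongr
      _ = (m + 1) / (2 * (m + 1 + 1)) := by field_simp; ring

theorem le_norm_one_sub_cfrac (L : List ℂ) (h : ∀ x ∈ L, ‖x‖ ≤ 1 / 4) :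
    ((L.length : ℝ) + 2) / (2 * (L.length + 1)) ≤ ‖1 - cfrac L‖ :=
  le_norm_one_sub_of_norm_le (Nat.cast_nonneg _) (norm_cfrac_le L h)

theorem half_le_norm_one_sub_cfrac (L : List ℂ) (h : ∀ x ∈ L, ‖x‖ ≤ 1 / 4) :
    1 / 2 ≤ ‖1 - cfrac L‖ := by
  refine le_trans ?_ (le_norm_one_sub_cfrac L h)
  rw [div_le_div_iff₀ (by norm_num) (by positivity)]
  linarith [(Nat.cast_nonneg L.length : (0 : ℝ) ≤ _)]

theorem one_sub_cfrac_ne_zero (L : List ℂ) (h : ∀ x ∈ L, ‖x‖ ≤ 1 / 4) : 1 - cfrac L ≠ 0 :=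
  norm_pos_iff.mp ((half_le_norm_one_sub_cfrac L h).trans_lt' (by norm_num))

theorem norm_cfrac_append_sub_le : ∀ (L : List ℂ) (c : ℂ), (∀ x ∈ L ++ [c], ‖x‖ ≤ 1 / 4) →
    ‖cfrac (L ++ [c]) - cfrac L‖ ≤ 1 / (2 * (L.length + 1) * (L.length + 2))
  | [], c, h => by
    norm_num [cfrac]
    simpa using h c (by simp)
  | a :: L, c, h => by
    have ha : ‖a‖ ≤ 1 / 4 := h a List.mem_cons_self
    have hLc : ∀ x ∈ L ++ [c], ‖x‖ ≤ 1 / 4 := fun x hx => h x (.tail a hx)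
    have hL : ∀ x ∈ L, ‖x‖ ≤ 1 / 4 := fun x hx => hLc x (List.mem_append_left _ hx)
    set m : ℝ := (L.length : ℝ)
    have hm : 0 ≤ m := Nat.cast_nonneg _
    have hx := le_norm_one_sub_cfrac (L ++ [c]) hLc
    have hy := le_norm_one_sub_cfrac L hL
    rw [List.length_append, List.length_singleton, Nat.cast_succ] at hx
    rw [List.cons_append, cfrac, cfrac, div_one_sub_sub_div_one_sub a
      (one_sub_cfrac_ne_zero _ hLc) (one_sub_cfrac_ne_zero _ hL), norm_div, norm_mul, norm_mul,
      List.length_cons, Nat.cast_succ]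
    calc ‖a‖ * ‖cfrac (L ++ [c]) - cfrac L‖ / (‖1 - cfrac (L ++ [c])‖ * ‖1 - cfrac L‖)
        ≤ (1 / 4) * (1 / (2 * (m + 1) * (m + 2)))
          / ((m + 1 + 2) / (2 * (m + 1 + 1)) * ((m + 2) / (2 * (m + 1)))) := by
          gcongr
          exact norm_cfrac_append_sub_le L c hLc
      _ = 1 / (2 * (m + 1 + 1) * (m + 1 + 2)) := by field_simp; ring

theorem dist_cfConv_succ_le (c : ℕ → ℂ → ℂ) (z : ℂ) (hc : ∀ j, ‖c j z‖ ≤ 1 / 4) (n : ℕ) :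
    dist (cfConv c n z) (cfConv c (n + 1) z) ≤ 2 / ((n : ℝ) + 2) - 2 / (((n + 1 : ℕ) : ℝ) + 2) := by
  set L := List.ofFn fun i : Fin (n + 1) => c i z
  have hsucc : (List.ofFn fun i : Fin (n + 1 + 1) => c i z) = L ++ [c (n + 1) z] := by
    simp only [L, List.ofFn_succ', List.concat_eq_append, Fin.val_castSucc, Fin.val_last]
  have hLc : ∀ x ∈ L ++ [c (n + 1) z], ‖x‖ ≤ 1 / 4 := by
    rw [← hsucc, List.forall_mem_ofFn_iff]
    exact fun i => hc i
  have hL : ∀ x ∈ L, ‖x‖ ≤ 1 / 4 := fun x hx => hLc x (List.mem_append_left _ hx)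
  have hlen : (L.length : ℝ) = n + 1 := by simp [L]
  have hdiff := norm_cfrac_append_sub_le L _ hLc
  rw [hlen] at hdiff
  rw [dist_comm, dist_eq_norm, cfConv, cfConv, hsucc, div_one_sub_sub_div_one_sub 1
    (one_sub_cfrac_ne_zero _ hLc) (one_sub_cfrac_ne_zero _ hL), one_mul, norm_div, norm_mul]
  calc ‖cfrac (L ++ [c (n + 1) z]) - cfrac L‖ / (‖1 - cfrac (L ++ [c (n + 1) z])‖ * ‖1 - cfrac L‖)
      ≤ (1 / (2 * ((n : ℝ) + 1 + 1) * ((n : ℝ) + 1 + 2))) / ((1 / 2) * (1 / 2)) := by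
        gcongr
        exacts [half_le_norm_one_sub_cfrac _ hLc, half_le_norm_one_sub_cfrac _ hL]
    _ = 2 / ((n : ℝ) + 2) - 2 / (((n + 1 : ℕ) : ℝ) + 2) := by push_cast; field_simp; ring

theorem worpitzky_circle_general (D : Set ℂ) (c : ℕ → ℂ → ℂ)
    (hbound : ∀ j, ∀ z ∈ D, ‖c j z‖ < 1 / 4) :
    ∃ f : ℂ → ℂ, ∀ K : Set ℂ, K ⊆ D → IsCompact K →
      TendstoUniformlyOn (cfConv c) f atTop K := by
  have hg : Tendsto (fun n : ℕ => 2 / ((n : ℝ) + 2)) atTop (𝓝 0) :=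
    tendsto_const_nhds.div_atTop (tendsto_atTop_add_const_right _ _ tendsto_natCast_atTop_atTop)
  have hcauchy : UniformCauchySeqOn (cfConv c) atTop D :=
    uniformCauchySeqOn_of_dist_succ_le_sub hg fun z hz =>
      dist_cfConv_succ_le c z fun j => (hbound j z hz).le
  obtain ⟨f, hf⟩ := hcauchy.exists_tendstoUniformlyOn
  exact ⟨f, fun K hK _ => hf.mono hK⟩

/-- **Worpitzky Circle Theorem.** If the analytic functions `c_j` on a domain `D` all take
values in the open disk of radius `1/4`, then the convergents of the continued fraction
`K[1, c₀(z), c₁(z), …]` converge uniformly on every compact subset of `D`. -/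
theorem worpitzky_circle (D : Set ℂ) (hD : IsOpen D) (hDconn : IsConnected D)
    (c : ℕ → ℂ → ℂ) (hc : ∀ j, AnalyticOnNhd ℂ (c j) D)
    (hbound : ∀ j, ∀ z ∈ D, ‖c j z‖ < 1 / 4) :
    ∃ f : ℂ → ℂ, ∀ K : Set ℂ, K ⊆ D → IsCompact K →
      TendstoUniformlyOn (cfConv c) f atTop K :=
  worpitzky_circle_general D c hbound
end

section
/- (Pringsheim's Theorem) Let φ(z) = Σ_{n≥0} a_n z^n be a power series with real coefficients a_n ≥ 0 and radius of convergence M ∈ (0, ∞). Then the point z = M is a singularity of φ: there is no open neighborhood U of M in ℂ and analytic function ψ on U such that ψ agrees with the sum of the series on U ∩ {|z| < M}. -/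
/-!
Expand `φ` around a point `ρ < M` close to `M`: since the coefficients are nonnegative, the
coefficients `cₘ = ∑ₙ C(m+n, m) a_{m+n} ρⁿ` of this expansion are nonnegative, and by Tonelli
`∑ cₘ sᵐ` converges exactly when `∑ aₙ (ρ + s)ⁿ` does. If `φ` continued analytically to a
neighbourhood of `M`, the expansion at `ρ` would be the Taylor series of the continuation, whose
radius exceeds `M - ρ`; taking `s` slightly larger than `M - ρ` makes `∑ aₙ rⁿ` converge for
some `r > M`.
-/

open Finset Topology
open scoped NNReal ENNReal

theorem HasSum.sum_antidiagonal {A α : Type*} [AddCommMonoid A] [HasAntidiagonal A]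
    [AddCommMonoid α] [TopologicalSpace α] [T3Space α] [ContinuousAdd α] {f : A × A → α} {s : α}
    (hf : HasSum f s) : HasSum (fun N => ∑ p ∈ antidiagonal N, f p) s := by
  rw [← HasAntidiagonal.sigmaAntidiagonalEquivProd.hasSum_iff] at hf
  refine hf.sigma fun N => ?_
  rw [← sum_coe_sort]
  exact hasSum_fintype _

section Recenter

variable {R : Type*}

/-- `recenterTerm a x (m, n) * yᵐ` is the `yᵐ xⁿ` term of `a_{m+n} (x + y)^{m+n}`. -/
def recenterTerm [Semiring R] (a : ℕ → R) (x : R) (p : ℕ × ℕ) : R :=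
  ((p.1 + p.2).choose p.1 : R) * a (p.1 + p.2) * x ^ p.2

noncomputable def recenterCoeff [Semiring R] [TopologicalSpace R] (a : ℕ → R) (x : R) (m : ℕ) :
    R :=
  ∑' n, recenterTerm a x (m, n)

theorem sum_antidiagonal_recenterTerm_mul_pow [CommSemiring R] (a : ℕ → R) (x y : R) (N : ℕ) :
    ∑ p ∈ antidiagonal N, recenterTerm a x p * y ^ p.1 = a N * (x + y) ^ N := by
  rw [Nat.sum_antidiagonal_eq_sum_range_succ_mk, add_comm x y, add_pow, mul_sum]
  refine sum_congr rfl fun k hk => ?_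
  rw [recenterTerm, Nat.add_sub_cancel' (Nat.lt_succ_iff.mp (mem_range.mp hk))]
  ring

end Recenter

section Nonneg

variable {a : ℕ → ℝ} {x y : ℝ}

theorem recenterTerm_nonneg (ha : ∀ n, 0 ≤ a n) (hx : 0 ≤ x) (p : ℕ × ℕ) :
    0 ≤ recenterTerm a x p :=
  mul_nonneg (mul_nonneg (Nat.cast_nonneg _) (ha _)) (pow_nonneg hx _)

theorem recenterCoeff_nonneg (ha : ∀ n, 0 ≤ a n) (hx : 0 ≤ x) (m : ℕ) :
    0 ≤ recenterCoeff a x m :=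
  tsum_nonneg fun _ => recenterTerm_nonneg ha hx _

theorem summable_recenterTerm_mul_pow_iff (ha : ∀ n, 0 ≤ a n) (hx : 0 ≤ x) (hy : 0 ≤ y) :
    Summable (fun p : ℕ × ℕ => recenterTerm a x p * y ^ p.1) ↔
      Summable fun N => a N * (x + y) ^ N := by
  refine ⟨fun h => ?_, fun h => ?_⟩
  · simpa only [sum_antidiagonal_recenterTerm_mul_pow] using
      h.hasSum.sum_antidiagonal.summable
  · rw [← HasAntidiagonal.sigmaAntidiagonalEquivProd.summable_iff]
    refine (summable_sigma_of_nonneg fun _ =>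
      mul_nonneg (recenterTerm_nonneg ha hx _) (pow_nonneg hy _)).mpr
        ⟨fun N => (hasSum_fintype _).summable, h.congr fun N => ?_⟩
    rw [tsum_fintype]
    exact ((sum_coe_sort _ _).trans (sum_antidiagonal_recenterTerm_mul_pow a x y N)).symm

theorem summable_recenterCoeff_mul_pow (ha : ∀ n, 0 ≤ a n) (hx : 0 ≤ x) (hy : 0 ≤ y)
    (h : Summable fun N => a N * (x + y) ^ N) : Summable fun m => recenterCoeff a x m * y ^ m :=
  ((summable_recenterTerm_mul_pow_iff ha hx hy).mpr h).prod.congr fun m => by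
    rw [recenterCoeff, ← tsum_mul_right]

theorem summable_recenterTerm_row (ha : ∀ n, 0 ≤ a n) (hx : 0 ≤ x) (hy : 0 < y)
    (h : Summable fun N => a N * (x + y) ^ N) (m : ℕ) :
    Summable fun n => recenterTerm a x (m, n) :=
  (summable_mul_right_iff (pow_ne_zero m hy.ne')).mp
    (((summable_recenterTerm_mul_pow_iff ha hx hy.le).mpr h).prod_factor m)

theorem summable_of_summable_recenterCoeff_mul_pow (ha : ∀ n, 0 ≤ a n) (hx : 0 ≤ x)
    (hy : 0 ≤ y) (hrow : ∀ m, Summable fun n => recenterTerm a x (m, n))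
    (h : Summable fun m => recenterCoeff a x m * y ^ m) :
    Summable fun N => a N * (x + y) ^ N := by
  refine (summable_recenterTerm_mul_pow_iff ha hx hy).mp <|
    (summable_prod_of_nonneg fun _ =>
      mul_nonneg (recenterTerm_nonneg ha hx _) (pow_nonneg hy _)).mpr
        ⟨fun m => (hrow m).mul_right (y ^ m), h.congr fun m => ?_⟩
  rw [recenterCoeff, ← tsum_mul_right]

theorem hasSum_recenterCoeff_mul_pow (ha : ∀ n, 0 ≤ a n) (hx : 0 ≤ x) {w : ℂ}
    (h : Summable fun N => a N * (x + ‖w‖) ^ N) :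
    HasSum (fun m => ((recenterCoeff a x m : ℝ) : ℂ) * w ^ m)
      (∑' N, (a N : ℂ) * (x + w) ^ N) := by
  set G : ℕ × ℕ → ℂ := fun p => ((recenterTerm a x p : ℝ) : ℂ) * w ^ p.1
  have hG : Summable G := by
    refine Summable.of_norm <|
      ((summable_recenterTerm_mul_pow_iff ha hx (norm_nonneg w)).mpr h).congr fun p => ?_
    rw [norm_mul, norm_pow, Complex.norm_real, Real.norm_of_nonneg (recenterTerm_nonneg ha hx p)]
  have hrow (m : ℕ) : HasSum (fun n => G (m, n)) (((recenterCoeff a x m : ℝ) : ℂ) * w ^ m) := by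
    have hsum : ∑' n, G (m, n) = ((recenterCoeff a x m : ℝ) : ℂ) * w ^ m := by
      simp only [G, recenterCoeff, Complex.ofReal_tsum, tsum_mul_right]
    exact hsum ▸ (hG.prod_factor m).hasSum
  have hdiag : HasSum (fun N => (a N : ℂ) * (x + w) ^ N) (∑' p, G p) := by
    have hfib (N : ℕ) : ∑ p ∈ antidiagonal N, G p = (a N : ℂ) * (x + w) ^ N := by
      rw [← sum_antidiagonal_recenterTerm_mul_pow (fun n => (a n : ℂ))]
      refine sum_congr rfl fun p _ => ?_
      simp only [G, recenterTerm]
      push_cast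
      rfl
    exact funext hfib ▸ hG.hasSum.sum_antidiagonal
  rw [hdiag.tsum_eq]
  exact hG.hasSum.prod_fiberwise hrow

end Nonneg

theorem norm_ofScalars_ofReal {c : ℕ → ℝ} (hc : ∀ m, 0 ≤ c m) (m : ℕ) :
    ‖FormalMultilinearSeries.ofScalars ℂ (fun m => (c m : ℂ)) m‖ = c m := by
  rw [FormalMultilinearSeries.ofScalars_norm, Complex.norm_real, Real.norm_of_nonneg (hc m)]

theorem summable_mul_pow_of_lt_radius_ofScalars {c : ℕ → ℝ} (hc : ∀ m, 0 ≤ c m) {r : ℝ≥0}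
    (hr : (r : ℝ≥0∞) < (FormalMultilinearSeries.ofScalars ℂ fun m => (c m : ℂ)).radius) :
    Summable fun m => c m * r ^ m := by
  simpa only [norm_ofScalars_ofReal hc] using FormalMultilinearSeries.summable_norm_mul_pow _ hr

theorem hasFPowerSeriesOnBall_recenter {a : ℕ → ℝ} {M x : ℝ} (ha : ∀ n, 0 ≤ a n) (hx : 0 ≤ x)
    (hxM : x < M) (hconv : ∀ r : ℝ, 0 ≤ r → r < M → Summable fun n => a n * r ^ n) :
    HasFPowerSeriesOnBall (fun z : ℂ => ∑' n, (a n : ℂ) * z ^ n)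
      (FormalMultilinearSeries.ofScalars ℂ fun m => ((recenterCoeff a x m : ℝ) : ℂ)) x
      (ENNReal.ofReal (M - x)) where
  r_le := by
    refine ENNReal.le_of_forall_nnreal_lt fun r hr => ?_
    have hr' : x + r < M := by
      rw [← ENNReal.ofReal_coe_nnreal, ENNReal.ofReal_lt_ofReal_iff (sub_pos.2 hxM)] at hr
      linarith
    refine FormalMultilinearSeries.le_radius_of_summable _ ?_
    simp only [norm_ofScalars_ofReal (recenterCoeff_nonneg ha hx)]
    exact summable_recenterCoeff_mul_pow ha hx r.2 (hconv _ (by positivity) hr')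
  r_pos := ENNReal.ofReal_pos.2 (sub_pos.2 hxM)
  hasSum {w} hw := by
    have hw' : x + ‖w‖ < M := by
      rw [Metric.eball_ofReal, Metric.mem_ball, dist_zero_right] at hw
      linarith
    simp only [FormalMultilinearSeries.ofScalars_apply_eq, smul_eq_mul]
    exact hasSum_recenterCoeff_mul_pow ha hx (hconv _ (by positivity) hw')

theorem HasFPowerSeriesAt.le_radius_of_differentiableOn {E : Type*} [NormedAddCommGroup E]
    [NormedSpace ℂ E] [CompleteSpace E] {f g : ℂ → E} {p : FormalMultilinearSeries ℂ ℂ E}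
    {c : ℂ} {R : ℝ≥0} (hf : HasFPowerSeriesAt f p c) (hfg : f =ᶠ[𝓝 c] g)
    (hg : DifferentiableOn ℂ g (Metric.closedBall c R)) (hR : 0 < R) :
    (R : ℝ≥0∞) ≤ p.radius := by
  have hgR := hg.hasFPowerSeriesOnBall hR
  rw [hf.eq_formalMultilinearSeries (hgR.hasFPowerSeriesAt.congr hfg.symm)]
  exact hgR.r_le

/-- **Pringsheim's Theorem.** If `φ(z) = Σ aₙ zⁿ` has nonnegative real coefficients and
radius of convergence `M ∈ (0, ∞)`, then `z = M` is a singularity of `φ`: no analytic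
function on a neighborhood of `M` agrees with the sum of the series on the part of the
neighborhood inside the disk of convergence. -/
theorem pringsheim (a : ℕ → ℝ) (ha : ∀ n, 0 ≤ a n) (M : ℝ) (hM : 0 < M)
    (hconv : ∀ r : ℝ, 0 ≤ r → r < M → Summable fun n => a n * r ^ n)
    (hdiv : ∀ r : ℝ, M < r → ¬ Summable fun n => a n * r ^ n) :
    ¬ ∃ (U : Set ℂ) (ψ : ℂ → ℂ), IsOpen U ∧ (M : ℂ) ∈ U ∧ AnalyticOnNhd ℂ ψ U ∧
      ∀ z ∈ U, ‖z‖ < M → ψ z = ∑' n, (a n : ℂ) * z ^ n := by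
  rintro ⟨U, ψ, hU, hMU, hψ, heq⟩
  obtain ⟨ε, hε, hεM, hball⟩ : ∃ ε > 0, ε ≤ M ∧ Metric.ball (M : ℂ) ε ⊆ U := by
    obtain ⟨ε, hε, h⟩ := Metric.isOpen_iff.mp hU _ hMU
    exact ⟨min ε M, lt_min hε hM, min_le_right _ _,
      (Metric.ball_subset_ball (min_le_left _ _)).trans h⟩
  -- The closed ball of radius `ε / 2` about `ρ` lies in `U` and reaches past `M`, so the
  -- Taylor series at `ρ` has radius `> M - ρ = ε / 4`.
  set ρ := M - ε / 4 with hρ_def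
  have hρ : 0 ≤ ρ := by linarith
  have hρM : dist (ρ : ℂ) M = ε / 4 := by
    rw [Complex.isometry_ofReal.dist_eq, Real.dist_eq, abs_sub_comm, hρ_def, sub_sub_cancel,
      abs_of_pos (by positivity)]
  have hφψ : (fun z : ℂ => ∑' n, (a n : ℂ) * z ^ n) =ᶠ[𝓝 (ρ : ℂ)] ψ := by
    have hρ_ball : (ρ : ℂ) ∈ Metric.ball 0 M := by
      rw [mem_ball_zero_iff, Complex.norm_real, Real.norm_of_nonneg hρ]; linarith
    filter_upwards [hU.mem_nhds (hball (by rw [Metric.mem_ball, hρM]; linarith)),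
      Metric.isOpen_ball.mem_nhds hρ_ball] with z hzU hzM
    exact (heq z hzU (mem_ball_zero_iff.mp hzM)).symm
  have hR : Metric.closedBall (ρ : ℂ) (ε / 2).toNNReal ⊆ U := fun z hz => by
    rw [Metric.mem_closedBall, Real.coe_toNNReal _ (by positivity)] at hz
    exact hball ((dist_triangle z ρ M).trans_lt (by linarith))
  have hrad := (hasFPowerSeriesOnBall_recenter ha hρ (by linarith) hconv).hasFPowerSeriesAt
    |>.le_radius_of_differentiableOn hφψ (hψ.differentiableOn.mono hR) (by simpa using hε)
  have hs : Summable fun m => recenterCoeff a ρ m * (3 * ε / 8) ^ m := by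
    have hlt : ((3 * ε / 8).toNNReal : ℝ≥0∞) < (ε / 2).toNNReal :=
      ENNReal.coe_lt_coe.2 ((Real.toNNReal_lt_toNNReal_iff (by positivity)).2 (by linarith))
    simpa only [Real.coe_toNNReal _ (by positivity : 0 ≤ 3 * ε / 8)] using
      summable_mul_pow_of_lt_radius_ofScalars (recenterCoeff_nonneg ha hρ) (hlt.trans_le hrad)
  have hrow := summable_recenterTerm_row ha hρ (by positivity : 0 < ε / 8)
    (hconv _ (by positivity) (by linarith))
  exact hdiv _ (by linarith)
    (summable_of_summable_recenterCoeff_mul_pow ha hρ (by positivity) hrow hs)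
end

section
/- (Corollary 3.2: meromorphic extension) Assume a_j → 0 as j → ∞. Then there exists a function F meromorphic on all of ℂ such that F(z) = g(z) for every z with |z| < M. In other words, the generating function of the weighted Catalan numbers extends to a meromorphic function on the whole complex plane. -/
open Filter Finset

/-- Final height of a `±1` path started at height `j`; `true` is a rise step,
`false` is a fall step. -/
def endH : ℕ → List Bool → ℕ
  | j, [] => j
  | j, true :: s => endH (j + 1) s
  | j, false :: s => endH (j - 1) s

/-- `isDyck j s` holds when the path `s` started at height `j` never goes below height 0
(every fall step occurs from height ≥ 1). -/
def isDyck : ℕ → List Bool → Bool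
  | _, [] => true
  | j, true :: s => isDyck (j + 1) s
  | j, false :: s => decide (1 ≤ j) && isDyck (j - 1) s

/-- `isJump j s` holds when the path `s` started at height `j` stays at height ≥ 1
(every fall step occurs from height ≥ 2). -/
def isJump : ℕ → List Bool → Bool
  | _, [] => true
  | j, true :: s => isJump (j + 1) s
  | j, false :: s => decide (2 ≤ j) && isJump (j - 1) s

/-- Weight of a lattice path: a rise step from height `j` has weight `u j`, a fall step
from height `j+1` to `j` has weight `v j`. -/
noncomputable def dwt (u v : ℕ → ℝ) : ℕ → List Bool → ℝ
  | _, [] => 1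
  | j, true :: s => u j * dwt u v (j + 1) s
  | j, false :: s => v (j - 1) * dwt u v (j - 1) s

/-- Weight `p(γ)` of a jump-chain path: an up-step from height `j` has weight
`λ_j/(1+λ_j+D_j)`, a down-step from height `j` has weight `1/(1+λ_j+D_j)`. -/
noncomputable def jwt (lam Dd : ℕ → ℝ) : ℕ → List Bool → ℝ
  | _, [] => 1
  | j, true :: s => lam j / (1 + lam j + Dd j) * jwt lam Dd (j + 1) s
  | j, false :: s => 1 / (1 + lam j + Dd j) * jwt lam Dd (j - 1) s

/-- `D_j = Σ_{i=1}^j ρ_i`. -/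
noncomputable def Dd (rho : ℕ → ℝ) (j : ℕ) : ℝ := ∑ i ∈ Finset.Icc 1 j, rho i

/-- `u(j) = λ_{j+1}/(1+λ_{j+1}+D_{j+1})`. -/
noncomputable def uWt (lam rho : ℕ → ℝ) (j : ℕ) : ℝ :=
  lam (j + 1) / (1 + lam (j + 1) + Dd rho (j + 1))

/-- `v(j) = 1/(1+λ_{j+2}+D_{j+2})`. -/
noncomputable def vWt (lam rho : ℕ → ℝ) (j : ℕ) : ℝ :=
  1 / (1 + lam (j + 2) + Dd rho (j + 2))

/-- The weighted Catalan number `C_k`: the sum of `ω(γ)` over all Dyck paths `γ` of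
length `2k` (paths of `k` rise and `k` fall steps from height 0 staying at height ≥ 0). -/
noncomputable def Ck (lam rho : ℕ → ℝ) (k : ℕ) : ℝ :=
  ∑ γ : Fin (2 * k) → Bool,
    if isDyck 0 (List.ofFn γ) = true ∧ endH 0 (List.ofFn γ) = 0 then
      dwt (uWt lam rho) (vWt lam rho) 0 (List.ofFn γ)
    else 0

/-- The power series `Σ_k C_k z^k` as a formal multilinear series over `ℂ`. -/
noncomputable def gSeries (lam rho : ℕ → ℝ) : FormalMultilinearSeries ℂ ℂ ℂ :=
  fun n => FormalMultilinearSeries.ofScalars ℂ (fun k => (Ck lam rho k : ℂ)) n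

/-- `M`, the radius of convergence of `g(z) = Σ_k C_k z^k`. -/
noncomputable def radiusM (lam rho : ℕ → ℝ) : ENNReal := (gSeries lam rho).radius

/-- `σ(ℓ) = ∏_{n=1}^ℓ 1/(1+D_n)`. -/
noncomputable def sigmaWt (rho : ℕ → ℝ) (l : ℕ) : ℝ :=
  ∏ n ∈ Finset.Icc 1 l, 1 / (1 + Dd rho n)

/-- `q_ℓ^{(k)} = Σ_{γ ∈ Γ_ℓ^{(k)}} p(γ) σ(ℓ)`, where `Γ_ℓ^{(k)}` is the set of jump-chain
paths of length `2k − ℓ − 1` that start at height 1, stay at height ≥ 1, and whose final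
step is an up-step ending at height `ℓ`. -/
noncomputable def qsum (lam rho : ℕ → ℝ) (k l : ℕ) : ℝ :=
  (∑ γ : Fin (2 * k - l - 1) → Bool,
    if isJump 1 (List.ofFn γ) = true ∧ endH 1 (List.ofFn γ) = l ∧
        (List.ofFn γ).getLast? = some true then
      jwt lam (Dd rho) 1 (List.ofFn γ)
    else 0) * sigmaWt rho l

/-- `Γ_ℓ^{(k)}`, as a set of step lists. -/
def Gamma (k l : ℕ) : Set (List Bool) :=
  {s | s.length = 2 * k - l - 1 ∧ isJump 1 s = true ∧ endH 1 s = l ∧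
    s.getLast? = some true}

/-- The path modification `γ ↦ γ̃`: insert `ℓ − 2` consecutive down-steps immediately
before the final (upward) step. -/
def tilde (l : ℕ) (s : List Bool) : List Bool :=
  s.dropLast ++ List.replicate (l - 2) false ++ [true]

/-! The first-return decomposition of Dyck paths gives `g = 1 + a₀ z g₁ g`, where `g_j` is the
generating function of the weights shifted by `j`; hence `g` is the continued fraction
`1 / (1 - a₀ z / (1 - a₁ z / (1 - ⋯)))`. The coefficients of `g_j` are bounded by Catalan numbers
times `ε ^ k` when `|a_i| ≤ ε` for `i ≥ j`, so `g_j` is analytic on the disc of radius `1 / (4ε)`.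
As `a_j → 0`, truncating the continued fraction deep enough writes `g`, near `0`, as a quotient of
two functions analytic on an arbitrarily large disc. By the identity theorem these quotients agree
wherever they are defined, so they glue to a meromorphic function on `ℂ`. -/

namespace WeightedCatalan

open Metric Topology FormalMultilinearSeries

attribute [local simp] endH isDyck dwt

variable {u v : ℕ → ℝ}

lemma endH_append (s t : List Bool) (j : ℕ) : endH j (s ++ t) = endH (endH j s) t := by
  induction s generalizing j with
  | nil => rfl
  | cons b s ih => cases b <;> simp [ih]

lemma isDyck_append (s t : List Bool) (j : ℕ) :
    isDyck j (s ++ t) = (isDyck j s && isDyck (endH j s) t) := by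
  induction s generalizing j with
  | nil => simp
  | cons b s ih => cases b <;> simp [ih, Bool.and_assoc]

lemma dwt_append (s t : List Bool) (j : ℕ) :
    dwt u v j (s ++ t) = dwt u v j s * dwt u v (endH j s) t := by
  induction s generalizing j with
  | nil => simp
  | cons b s ih => cases b <;> simp [ih, mul_assoc]

lemma isDyck_succ {s : List Bool} {j : ℕ} (h : isDyck j s) : isDyck (j + 1) s := by
  induction s generalizing j with
  | nil => rfl
  | cons b s ih =>
    cases b
    · simp only [isDyck, Bool.and_eq_true, decide_eq_true_eq] at h ⊢
      exact ⟨by omega, by simpa [Nat.sub_add_cancel h.1] using ih h.2⟩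
    · exact ih h

lemma endH_succ {s : List Bool} {j : ℕ} (h : isDyck j s) : endH (j + 1) s = endH j s + 1 := by
  induction s generalizing j with
  | nil => rfl
  | cons b s ih =>
    cases b
    · simp only [isDyck, Bool.and_eq_true, decide_eq_true_eq] at h
      simpa [Nat.sub_add_cancel h.1] using ih h.2
    · exact ih h

lemma dwt_succ {s : List Bool} {j : ℕ} (h : isDyck j s) :
    dwt u v (j + 1) s = dwt (fun i => u (i + 1)) (fun i => v (i + 1)) j s := by
  induction s generalizing j with
  | nil => rfl
  | cons b s ih =>
    cases b
    · simp only [isDyck, Bool.and_eq_true, decide_eq_true_eq] at h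
      obtain ⟨j, rfl⟩ : ∃ i, j = i + 1 := ⟨j - 1, by omega⟩
      simp [ih (by simpa using h.2)]
    · simp [ih h]

lemma endH_add_length_mod_two {s : List Bool} {j : ℕ} (h : isDyck j s) :
    (endH j s + s.length) % 2 = j % 2 := by
  induction s generalizing j with
  | nil => simp
  | cons b s ih =>
    cases b
    · simp only [isDyck, Bool.and_eq_true, decide_eq_true_eq] at h
      have := ih h.2
      simp only [endH, List.length_cons]
      omega
    · have := ih (j := j + 1) h
      simp only [endH, List.length_cons]
      omega

/-- Splits a path started at height `c + 1` at its first fall step from height 1 to 0;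
the first piece is returned as a path started at height `c`. -/
def splitFirstReturn : ℕ → List Bool → List Bool × List Bool
  | _, [] => ([], [])
  | c, true :: s => ((splitFirstReturn (c + 1) s).1.cons true, (splitFirstReturn (c + 1) s).2)
  | 0, false :: s => ([], s)
  | c + 1, false :: s => ((splitFirstReturn c s).1.cons false, (splitFirstReturn c s).2)

lemma splitFirstReturn_spec {t : List Bool} {c : ℕ} (hd : isDyck (c + 1) t)
    (he : endH (c + 1) t = 0) :
    t = (splitFirstReturn c t).1 ++ false :: (splitFirstReturn c t).2 ∧
    isDyck c (splitFirstReturn c t).1 ∧ endH c (splitFirstReturn c t).1 = 0 ∧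
    isDyck 0 (splitFirstReturn c t).2 ∧ endH 0 (splitFirstReturn c t).2 = 0 := by
  induction t generalizing c with
  | nil => simp at he
  | cons b t ih =>
    cases b
    · simp only [isDyck, Bool.and_eq_true, decide_eq_true_eq, add_tsub_cancel_right] at hd
      simp only [endH, add_tsub_cancel_right] at he
      cases c with
      | zero => exact ⟨rfl, rfl, rfl, hd.2, he⟩
      | succ c =>
        obtain ⟨e1, e2, e3, e4, e5⟩ := ih hd.2 he
        refine ⟨by simpa [splitFirstReturn] using e1, ?_, ?_, e4, e5⟩ <;> simpa [splitFirstReturn]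
    · obtain ⟨e1, e2, e3, e4, e5⟩ := ih hd he
      exact ⟨by simpa [splitFirstReturn] using e1, e2, e3, e4, e5⟩

lemma splitFirstReturn_append {a : List Bool} {c : ℕ} (b : List Bool) (hd : isDyck c a)
    (he : endH c a = 0) : splitFirstReturn c (a ++ false :: b) = (a, b) := by
  induction a generalizing c with
  | nil => simp only [endH] at he; subst he; rfl
  | cons x a ih =>
    cases x
    · simp only [isDyck, Bool.and_eq_true, decide_eq_true_eq] at hd
      obtain ⟨c, rfl⟩ : ∃ c', c = c' + 1 := ⟨c - 1, by omega⟩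
      simp only [endH, add_tsub_cancel_right] at he
      simp only [add_tsub_cancel_right] at hd
      simp [splitFirstReturn, ih hd.2 he]
    · simp [splitFirstReturn, ih hd he]

/-- `Ck lam rho` is `weightedCatalan (uWt lam rho) (vWt lam rho)` by definition. -/
noncomputable def weightedCatalan (u v : ℕ → ℝ) (k : ℕ) : ℝ :=
  ∑ γ : Fin (2 * k) → Bool,
    if isDyck 0 (List.ofFn γ) = true ∧ endH 0 (List.ofFn γ) = 0 then
      dwt u v 0 (List.ofFn γ)
    else 0

def dyckWords (k : ℕ) : Finset (List Bool) :=
  ((Finset.univ : Finset (Fin (2 * k) → Bool)).image List.ofFn).filter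
    fun s => isDyck 0 s = true ∧ endH 0 s = 0

lemma mem_dyckWords {k : ℕ} {s : List Bool} :
    s ∈ dyckWords k ↔ s.length = 2 * k ∧ isDyck 0 s ∧ endH 0 s = 0 := by
  simp only [dyckWords, Finset.mem_filter, Finset.mem_image, Finset.mem_univ, true_and]
  refine and_congr_left fun _ => ⟨?_, fun h => ⟨fun i => s.get (i.cast h.symm), ?_⟩⟩
  · rintro ⟨γ, rfl⟩
    exact List.length_ofFn
  · exact List.ext_get (by simp [h]) fun n _ _ => by simp

lemma mem_dyckWords_length_div_two {s : List Bool} (hd : isDyck 0 s) (he : endH 0 s = 0) :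
    s ∈ dyckWords (s.length / 2) := by
  have := endH_add_length_mod_two hd
  exact mem_dyckWords.2 ⟨by omega, hd, he⟩

lemma weightedCatalan_eq_sum_dyckWords (k : ℕ) :
    weightedCatalan u v k = ∑ s ∈ dyckWords k, dwt u v 0 s := by
  classical
  rw [dyckWords, Finset.sum_filter, Finset.sum_image fun _ _ _ _ h => List.ofFn_injective h]
  rfl

lemma weightedCatalan_zero : weightedCatalan u v 0 = 1 := by
  simp [weightedCatalan]

lemma cons_append_mem_dyckWords {a b : List Bool} {i j : ℕ} (ha : a ∈ dyckWords i)
    (hb : b ∈ dyckWords j) : true :: (a ++ false :: b) ∈ dyckWords (i + j + 1) := by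
  obtain ⟨hal, had, hae⟩ := mem_dyckWords.1 ha
  obtain ⟨hbl, hbd, hbe⟩ := mem_dyckWords.1 hb
  refine mem_dyckWords.2 ⟨by simp [hal, hbl]; ring, ?_, ?_⟩
  · simp [isDyck_append, isDyck_succ had, endH_succ had, hae, hbd]
  · simp [endH_append, endH_succ had, hae, hbe]

lemma dwt_cons_append {a : List Bool} (b : List Bool) (hd : isDyck 0 a) (he : endH 0 a = 0) :
    dwt u v 0 (true :: (a ++ false :: b)) =
      u 0 * v 0 * dwt (fun i => u (i + 1)) (fun i => v (i + 1)) 0 a * dwt u v 0 b := by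
  simp only [dwt, zero_add, dwt_append, endH_succ hd, he, dwt_succ hd]
  ring

lemma exists_splitFirstReturn_tail {s : List Bool} {k : ℕ} (hs : s ∈ dyckWords (k + 1)) :
    ∃ a b, splitFirstReturn 0 s.tail = (a, b) ∧ s = true :: (a ++ false :: b) ∧
      a ∈ dyckWords (a.length / 2) ∧ b ∈ dyckWords (b.length / 2) ∧
      a.length / 2 + b.length / 2 = k := by
  obtain ⟨hl, hd, he⟩ := mem_dyckWords.1 hs
  obtain ⟨t, rfl⟩ : ∃ t, s = true :: t := by
    match s, hd with
    | true :: t, _ => exact ⟨t, rfl⟩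
  obtain ⟨e1, had, hae, hbd, hbe⟩ := splitFirstReturn_spec (c := 0) hd he
  set a := (splitFirstReturn 0 t).1
  set b := (splitFirstReturn 0 t).2
  have hla := mem_dyckWords.1 (mem_dyckWords_length_div_two had hae)
  have hlb := mem_dyckWords.1 (mem_dyckWords_length_div_two hbd hbe)
  have hlt := congrArg List.length e1
  simp only [List.length_append, List.length_cons] at hl hlt
  exact ⟨a, b, rfl, congrArg _ e1, mem_dyckWords_length_div_two had hae,
    mem_dyckWords_length_div_two hbd hbe, by omega⟩

/-- First-return decomposition: a nonempty Dyck word is `true :: a ++ false :: b` with Dyck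
words `a` (read one level up, hence with shifted weights) and `b`. -/
lemma weightedCatalan_succ (k : ℕ) :
    weightedCatalan u v (k + 1) = ∑ p ∈ antidiagonal k,
      u 0 * v 0 * weightedCatalan (fun i => u (i + 1)) (fun i => v (i + 1)) p.1 *
        weightedCatalan u v p.2 := by
  rw [weightedCatalan_eq_sum_dyckWords]
  trans ∑ x ∈ (antidiagonal k).sigma fun p => dyckWords p.1 ×ˢ dyckWords p.2,
    u 0 * v 0 * dwt (fun i => u (i + 1)) (fun i => v (i + 1)) 0 x.2.1 * dwt u v 0 x.2.2
  swap
  · simp only [Finset.sum_sigma, Finset.sum_product, weightedCatalan_eq_sum_dyckWords,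
      Finset.mul_sum, Finset.sum_mul]
    exact Finset.sum_congr rfl fun p _ => Finset.sum_comm
  symm
  refine Finset.sum_nbij' (fun x => true :: (x.2.1 ++ false :: x.2.2))
    (fun s => ⟨((splitFirstReturn 0 s.tail).1.length / 2,
      (splitFirstReturn 0 s.tail).2.length / 2), splitFirstReturn 0 s.tail⟩) ?_ ?_ ?_ ?_ ?_
  · rintro ⟨p, a, b⟩ hx
    simp only [Finset.mem_sigma, HasAntidiagonal.mem_antidiagonal, Finset.mem_product] at hx
    obtain ⟨hp, ha, hb⟩ := hx
    simpa [← hp] using cons_append_mem_dyckWords ha hb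
  · intro s hs
    obtain ⟨a, b, hab, -, ha, hb, hk⟩ := exists_splitFirstReturn_tail hs
    simp only [hab, Finset.mem_sigma, HasAntidiagonal.mem_antidiagonal, Finset.mem_product]
    exact ⟨hk, ha, hb⟩
  · rintro ⟨p, a, b⟩ hx
    simp only [Finset.mem_sigma, HasAntidiagonal.mem_antidiagonal, Finset.mem_product] at hx
    obtain ⟨-, ha, hb⟩ := hx
    obtain ⟨hal, had, hae⟩ := mem_dyckWords.1 ha
    obtain ⟨hbl, -, -⟩ := mem_dyckWords.1 hb
    simp [splitFirstReturn_append b had hae, hal, hbl]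
  · intro s hs
    obtain ⟨a, b, hab, hs, -⟩ := exists_splitFirstReturn_tail hs
    simp only [hab, ← hs]
  · rintro ⟨p, a, b⟩ hx
    simp only [Finset.mem_sigma, Finset.mem_product] at hx
    obtain ⟨-, had, hae⟩ := mem_dyckWords.1 hx.2.1
    exact (dwt_cons_append b had hae).symm

lemma catalan_le_four_pow (n : ℕ) : catalan n ≤ 4 ^ n := by
  rw [catalan_eq_centralBinom_div]
  exact (Nat.div_le_self _ _).trans (Nat.centralBinom_le_four_pow n)

lemma abs_weightedCatalan_le_catalan_mul {ε : ℝ} (hε : ∀ j, |u j * v j| ≤ ε) (k : ℕ) :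
    |weightedCatalan u v k| ≤ catalan k * ε ^ k := by
  induction k using Nat.strong_induction_on generalizing u v with
  | _ k ih =>
    rcases k with _ | k
    · simp [weightedCatalan_zero]
    have hε0 : 0 ≤ ε := (abs_nonneg _).trans (hε 0)
    rw [weightedCatalan_succ, catalan_succ', Nat.cast_sum, Finset.sum_mul]
    refine (Finset.abs_sum_le_sum_abs _ _).trans (Finset.sum_le_sum fun p hp => ?_)
    rw [HasAntidiagonal.mem_antidiagonal] at hp
    have h1 := ih p.1 (by omega) (fun j => hε (j + 1))
    have h2 := ih p.2 (by omega) hε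
    calc |u 0 * v 0 * weightedCatalan (fun i => u (i + 1)) (fun i => v (i + 1)) p.1 *
          weightedCatalan u v p.2|
        ≤ ε * (catalan p.1 * ε ^ p.1) * (catalan p.2 * ε ^ p.2) := by
          rw [abs_mul, abs_mul]
          gcongr
          · exact hε 0
      _ = (catalan p.1 * catalan p.2 : ℕ) * ε ^ (k + 1) := by
          rw [← hp]; push_cast; ring

lemma abs_weightedCatalan_le {ε : ℝ} (hε : ∀ j, |u j * v j| ≤ ε) (k : ℕ) :
    |weightedCatalan u v k| ≤ (4 * ε) ^ k := by
  have hε0 : 0 ≤ ε := (abs_nonneg _).trans (hε 0)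
  calc |weightedCatalan u v k| ≤ catalan k * ε ^ k := abs_weightedCatalan_le_catalan_mul hε k
    _ ≤ 4 ^ k * ε ^ k := by gcongr; exact_mod_cast catalan_le_four_pow k
    _ = (4 * ε) ^ k := (mul_pow _ _ _).symm

noncomputable def weightedCatalanSeries (u v : ℕ → ℝ) : FormalMultilinearSeries ℂ ℂ ℂ :=
  ofScalars ℂ fun k => (weightedCatalan u v k : ℂ)

lemma weightedCatalanSeries_sum (z : ℂ) :
    (weightedCatalanSeries u v).sum z = ∑' k, (weightedCatalan u v k : ℂ) * z ^ k :=
  ofScalars_sum_eq _ z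

lemma le_radius_weightedCatalanSeries {ε : ℝ} (hε : ∀ j, |u j * v j| ≤ ε) {r : NNReal}
    (hr : r * (4 * ε) ≤ 1) : (r : ENNReal) ≤ (weightedCatalanSeries u v).radius := by
  refine le_radius_of_bound _ 1 fun k => ?_
  rw [weightedCatalanSeries, ofScalars_norm, Complex.norm_real, Real.norm_eq_abs]
  have hε0 : 0 ≤ ε := (abs_nonneg _).trans (hε 0)
  calc |weightedCatalan u v k| * r ^ k ≤ (4 * ε) ^ k * r ^ k := by
        gcongr; exact abs_weightedCatalan_le hε k
    _ = (r * (4 * ε)) ^ k := by ring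
    _ ≤ 1 := pow_le_one₀ (by positivity) hr

lemma summable_norm_weightedCatalan_mul_pow {ε : ℝ} (hε : ∀ j, |u j * v j| ≤ ε) {z : ℂ}
    (hz : 4 * ε * ‖z‖ < 1) : Summable fun k => ‖(weightedCatalan u v k : ℂ) * z ^ k‖ := by
  have hε0 : 0 ≤ ε := (abs_nonneg _).trans (hε 0)
  refine .of_nonneg_of_le (fun _ => norm_nonneg _) (fun k => ?_)
    (summable_geometric_of_lt_one (by positivity) hz)
  rw [norm_mul, norm_pow, Complex.norm_real, Real.norm_eq_abs, mul_pow]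
  gcongr
  exact abs_weightedCatalan_le hε k

lemma weightedCatalanSeries_sum_eq {ε : ℝ} (hε : ∀ j, |u j * v j| ≤ ε) {z : ℂ}
    (hz : 4 * ε * ‖z‖ < 1) :
    (weightedCatalanSeries u v).sum z = 1 + (u 0 * v 0 : ℝ) * z *
      (weightedCatalanSeries (fun i => u (i + 1)) (fun i => v (i + 1))).sum z *
        (weightedCatalanSeries u v).sum z := by
  have h := summable_norm_weightedCatalan_mul_pow hε hz
  have h₁ := summable_norm_weightedCatalan_mul_pow (u := fun i => u (i + 1))
    (v := fun i => v (i + 1)) (fun j => hε (j + 1)) hz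
  simp only [weightedCatalanSeries_sum]
  rw [mul_assoc, tsum_mul_tsum_eq_tsum_sum_antidiagonal_of_summable_norm h₁ h,
    h.of_norm.tsum_eq_zero_add, ← tsum_mul_left]
  congr 1
  · simp [weightedCatalan_zero]
  refine tsum_congr fun k => ?_
  rw [weightedCatalan_succ, Finset.mul_sum]
  push_cast
  rw [Finset.sum_mul]
  refine Finset.sum_congr rfl fun p hp => ?_
  rw [HasAntidiagonal.mem_antidiagonal] at hp
  rw [← hp, pow_succ, pow_add]
  ring

/-- Numerator and denominator `(P, Q)` of the finite continued fraction
`1 / (1 - a₀ z / (1 - a₁ z / ⋯ / (1 - a_{n-1} z t(z))))` in the tail `t`. -/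
noncomputable def cfNumDen : (ℕ → ℂ) → (ℂ → ℂ) → ℕ → (ℂ → ℂ) × (ℂ → ℂ)
  | _, t, 0 => (t, 1)
  | a, t, n + 1 =>
    let pq := cfNumDen (fun i => a (i + 1)) t n
    (pq.2, fun z => pq.2 z - a 0 * z * pq.1 z)

lemma analyticOnNhd_cfNumDen {a : ℕ → ℂ} {t : ℂ → ℂ} {S : Set ℂ} (ht : AnalyticOnNhd ℂ t S)
    (n : ℕ) : AnalyticOnNhd ℂ (cfNumDen a t n).1 S ∧ AnalyticOnNhd ℂ (cfNumDen a t n).2 S := by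
  induction n generalizing a with
  | zero => exact ⟨ht, analyticOnNhd_const⟩
  | succ n ih =>
    obtain ⟨h₁, h₂⟩ := ih (a := fun i => a (i + 1))
    exact ⟨h₂, h₂.sub ((analyticOnNhd_const.mul analyticOnNhd_id).mul h₁)⟩

lemma cfNumDen_snd_zero (a : ℕ → ℂ) (t : ℂ → ℂ) (n : ℕ) : (cfNumDen a t n).2 0 = 1 := by
  induction n generalizing a with
  | zero => rfl
  | succ n ih => simp [cfNumDen, ih]

lemma cfNumDen_fst_eq {a : ℕ → ℂ} {f : ℕ → ℂ → ℂ} {z : ℂ}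
    (hf : ∀ j, f j z = 1 + a j * z * f (j + 1) z * f j z) (n : ℕ) :
    (cfNumDen a (f n) n).1 z = (cfNumDen a (f n) n).2 z * f 0 z := by
  induction n generalizing a f with
  | zero => simp [cfNumDen]
  | succ n ih =>
    have h := ih (a := fun i => a (i + 1)) (f := fun i => f (i + 1)) fun j => hf (j + 1)
    simp only [cfNumDen]
    linear_combination -(cfNumDen (fun i => a (i + 1)) (f (n + 1)) n).2 z * hf 0 +
      a 0 * z * f 0 z * h

lemma eqOn_eball_zero_of_eventuallyEq {f g : ℂ → ℂ} {r : ENNReal}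
    (hf : AnalyticOnNhd ℂ f (eball 0 r)) (hg : AnalyticOnNhd ℂ g (eball 0 r))
    (hfg : f =ᶠ[𝓝 0] g) : Set.EqOn f g (eball 0 r) := fun _ hz =>
  hf.eqOn_of_preconnected_of_eventuallyEq hg (convex_eball 0 r).isPreconnected
    (mem_eball_self (pos_of_mem_eball hz)) hfg hz

lemma eventually_ne_zero_of_analyticOnNhd_eball {f : ℂ → ℂ} {r : ENNReal}
    (hf : AnalyticOnNhd ℂ f (eball 0 r)) (hf0 : f 0 ≠ 0) {x : ℂ} (hx : x ∈ eball 0 r) :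
    ∀ᶠ z in 𝓝[≠] x, f z ≠ 0 := by
  by_contra h
  simp only [Filter.not_eventually, not_not] at h
  exact hf0 (hf.eqOn_zero_of_preconnected_of_frequently_eq_zero
    (convex_eball 0 r).isPreconnected hx h (mem_eball_self (pos_of_mem_eball hx)))

section Gluing

variable {P Q : ℕ → ℂ → ℂ}

open Classical in
noncomputable def gluedQuot (P Q : ℕ → ℂ → ℂ) (G : ℂ → ℂ) (z : ℂ) : ℂ :=
  if h : ∃ n : ℕ, z ∈ eball 0 n ∧ Q n z ≠ 0 then P h.choose z / Q h.choose z else G z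

lemma gluedQuot_eq {G : ℂ → ℂ}
    (hPQ : ∀ n m : ℕ, Set.EqOn (fun z => P n z * Q m z) (fun z => P m z * Q n z)
      (eball 0 (min n m)))
    {n : ℕ} {z : ℂ} (hz : z ∈ eball 0 n) (hQz : Q n z ≠ 0) :
    gluedQuot P Q G z = P n z / Q n z := by
  have h : ∃ n : ℕ, z ∈ eball 0 n ∧ Q n z ≠ 0 := ⟨n, hz, hQz⟩
  rw [gluedQuot, dif_pos h, div_eq_div_iff h.choose_spec.2 hQz]
  exact hPQ _ _ (mem_eball.2 (lt_min h.choose_spec.1 hz))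

lemma gluedQuot_eq_self {G : ℂ → ℂ} {z : ℂ}
    (h : ∀ n : ℕ, z ∈ eball 0 n → P n z = Q n z * G z) : gluedQuot P Q G z = G z := by
  rw [gluedQuot]
  split_ifs with hex
  · rw [h _ hex.choose_spec.1, mul_div_cancel_left₀ _ hex.choose_spec.2]
  · rfl

lemma meromorphicOn_gluedQuot (G : ℂ → ℂ) (hP : ∀ n : ℕ, AnalyticOnNhd ℂ (P n) (eball 0 n))
    (hQ : ∀ n : ℕ, AnalyticOnNhd ℂ (Q n) (eball 0 n)) (hQ0 : ∀ n, Q n 0 ≠ 0)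
    (hPQ : ∀ n m : ℕ, Set.EqOn (fun z => P n z * Q m z) (fun z => P m z * Q n z)
      (eball 0 (min n m))) :
    MeromorphicOn (gluedQuot P Q G) Set.univ := by
  intro x _
  obtain ⟨N, hN⟩ := ENNReal.exists_nat_gt (enorm_ne_top (x := x))
  have hx : x ∈ eball (0 : ℂ) N := by simpa using hN
  refine ((hP N x hx).meromorphicAt.div (hQ N x hx).meromorphicAt).congr ?_
  filter_upwards [eventually_ne_zero_of_analyticOnNhd_eball (hQ N) (hQ0 N) hx,
    nhdsWithin_le_nhds (isOpen_eball.mem_nhds hx)] with z hQz hz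
  exact (gluedQuot_eq hPQ hz hQz).symm

theorem exists_meromorphicOn_eqOn_of_eventuallyEq_mul {g : ℂ → ℂ} {R : ENNReal}
    (hg : AnalyticOnNhd ℂ g (eball 0 R)) (hP : ∀ n : ℕ, AnalyticOnNhd ℂ (P n) (eball 0 n))
    (hQ : ∀ n : ℕ, AnalyticOnNhd ℂ (Q n) (eball 0 n)) (hQ0 : ∀ n, Q n 0 ≠ 0)
    (hPQ : ∀ n, P n =ᶠ[𝓝 0] fun z => Q n z * g z) :
    ∃ F : ℂ → ℂ, MeromorphicOn F Set.univ ∧ Set.EqOn F g (eball 0 R) := by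
  have hcross : ∀ n m : ℕ, Set.EqOn (fun z => P n z * Q m z) (fun z => P m z * Q n z)
      (eball 0 (min n m)) := by
    intro n m
    have hn : eball (0 : ℂ) (min n m) ⊆ eball 0 n := eball_subset_eball (min_le_left _ _)
    have hm : eball (0 : ℂ) (min n m) ⊆ eball 0 m := eball_subset_eball (min_le_right _ _)
    refine eqOn_eball_zero_of_eventuallyEq (((hP n).mono hn).mul ((hQ m).mono hm))
      (((hP m).mono hm).mul ((hQ n).mono hn)) ?_
    filter_upwards [hPQ n, hPQ m] with z hPn hPm
    rw [hPn, hPm]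
    ring
  refine ⟨gluedQuot P Q g, meromorphicOn_gluedQuot g hP hQ hQ0 hcross,
    fun z hz => gluedQuot_eq_self fun n hn => ?_⟩
  have hn' : eball (0 : ℂ) (min n R) ⊆ eball 0 n := eball_subset_eball (min_le_left _ _)
  have hR : eball (0 : ℂ) (min n R) ⊆ eball 0 R := eball_subset_eball (min_le_right _ _)
  exact eqOn_eball_zero_of_eventuallyEq ((hP n).mono hn') (((hQ n).mono hn').mul (hg.mono hR))
    (hPQ n) (mem_eball.2 (lt_min hn hz))

end Gluing

lemma analyticOnNhd_weightedCatalanSeries_sum {ε : ℝ} (hε : ∀ j, |u j * v j| ≤ ε)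
    {r : NNReal} (hr : r * (4 * ε) ≤ 1) :
    AnalyticOnNhd ℂ (weightedCatalanSeries u v).sum (eball 0 r) :=
  (weightedCatalanSeries u v).analyticOnNhd.mono
    (eball_subset_eball (le_radius_weightedCatalanSeries hε hr))

noncomputable def tailSum (u v : ℕ → ℝ) (j : ℕ) : ℂ → ℂ :=
  (weightedCatalanSeries (fun i => u (i + j)) (fun i => v (i + j))).sum

lemma tailSum_eq {ε : ℝ} (hε : ∀ j, |u j * v j| ≤ ε) {z : ℂ} (hz : 4 * ε * ‖z‖ < 1) (j : ℕ) :
    tailSum u v j z = 1 + (u j * v j : ℝ) * z * tailSum u v (j + 1) z * tailSum u v j z := by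
  have h := weightedCatalanSeries_sum_eq (u := fun i => u (i + j)) (v := fun i => v (i + j))
    (fun i => hε (i + j)) hz
  simp only [zero_add, Nat.add_right_comm _ 1 j] at h
  exact h

theorem exists_eventuallyEq_mul_weightedCatalanSeries_sum
    (ha : Tendsto (fun j => u j * v j) atTop (𝓝 0)) :
    ∃ P Q : ℕ → ℂ → ℂ, (∀ n : ℕ, AnalyticOnNhd ℂ (P n) (eball 0 n)) ∧
      (∀ n : ℕ, AnalyticOnNhd ℂ (Q n) (eball 0 n)) ∧ (∀ n, Q n 0 = 1) ∧
      ∀ n, P n =ᶠ[𝓝 0] fun z => Q n z * (weightedCatalanSeries u v).sum z := by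
  obtain ⟨A, hA⟩ := ha.abs.bddAbove_range
  replace hA : ∀ j, |u j * v j| ≤ A := fun j => hA ⟨j, rfl⟩
  have hA0 : 0 ≤ A := (abs_nonneg _).trans (hA 0)
  -- beyond `J n` every tail converges on the disc of radius `n`
  choose J hJ using fun n : ℕ =>
    (Metric.tendsto_atTop.1 ha) (4 * (n + 1))⁻¹ (by positivity)
  have htail : ∀ n : ℕ, AnalyticOnNhd ℂ (tailSum u v (J n)) (eball 0 n) := by
    intro n
    have hr : ((n : NNReal) : ℝ) * (4 * (4 * ((n : ℝ) + 1))⁻¹) ≤ 1 := by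
      push_cast
      field_simp
      linarith
    simpa [tailSum] using analyticOnNhd_weightedCatalanSeries_sum
      (fun i => by simpa [Real.dist_eq] using (hJ n (i + J n) (by omega)).le) hr
  set a : ℕ → ℂ := fun j => (u j * v j : ℝ)
  refine ⟨fun n => (cfNumDen a (tailSum u v (J n)) (J n)).1,
    fun n => (cfNumDen a (tailSum u v (J n)) (J n)).2, ?_, ?_,
    fun n => cfNumDen_snd_zero _ _ _, fun n => ?_⟩
  · exact fun n => (analyticOnNhd_cfNumDen (htail n) _).1
  · exact fun n => (analyticOnNhd_cfNumDen (htail n) _).2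
  filter_upwards [ball_mem_nhds (0 : ℂ) (inv_pos.2 (by positivity : 0 < 4 * A + 1))]
    with z hz
  have hz' : 4 * A * ‖z‖ < 1 := by
    rw [mem_ball_zero_iff, ← one_div, lt_div_iff₀ (by positivity)] at hz
    nlinarith [norm_nonneg z]
  exact cfNumDen_fst_eq (tailSum_eq hA hz') (J n)

end WeightedCatalan

open WeightedCatalan in
theorem meromorphic_extension_general (lam rho : ℕ → ℝ)
    (ha : Tendsto (fun j => uWt lam rho j * vWt lam rho j) atTop (nhds 0)) :
    ∃ F : ℂ → ℂ, MeromorphicOn F (Set.univ : Set ℂ) ∧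
      ∀ z : ℂ, (‖z‖₊ : ENNReal) < radiusM lam rho →
        F z = ∑' k, (Ck lam rho k : ℂ) * z ^ k := by
  obtain ⟨P, Q, hP, hQ, hQ0, hPQ⟩ := exists_eventuallyEq_mul_weightedCatalanSeries_sum ha
  obtain ⟨F, hF, hFg⟩ := exists_meromorphicOn_eqOn_of_eventuallyEq_mul
    (weightedCatalanSeries _ _).analyticOnNhd hP hQ (fun n => by simp [hQ0]) hPQ
  refine ⟨F, hF, fun z hz => (hFg ?_).trans (weightedCatalanSeries_sum z)⟩
  rwa [Metric.mem_eball, edist_zero_right, enorm_eq_nnnorm]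

/-- **Corollary 3.2 (meromorphic extension).** If `a_j = u(j)v(j) → 0`, then the
generating function `g` of the weighted Catalan numbers extends to a function
meromorphic on all of `ℂ`. -/
theorem meromorphic_extension (lam rho : ℕ → ℝ)
    (hlam : ∀ i, 1 ≤ i → 0 ≤ lam i) (hrho : ∀ i, 1 ≤ i → 0 ≤ rho i)
    (ha : Tendsto (fun j => uWt lam rho j * vWt lam rho j) atTop (nhds 0)) :
    ∃ F : ℂ → ℂ, MeromorphicOn F (Set.univ : Set ℂ) ∧
      ∀ z : ℂ, (‖z‖₊ : ENNReal) < radiusM lam rho →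
        F z = ∑' k, (Ck lam rho k : ℂ) * z ^ k :=
  meromorphic_extension_general lam rho ha
end

section
/- (Lemma 3.3) Assume a_j → 0 as j → ∞. Then for every real d > 0: M ≤ d if and only if the series g(d) = Σ_{k≥0} C_k d^k diverges (i.e., equals +∞). -/
open Filter Finset

/-!
Let `g_j` be the generating function of Dyck paths whose weights are shifted up by `j` levels,
so `g = g_0`, and let `a_j = u(j) v(j)`. Decomposing a path at its first return to height `0`
gives `g_j = 1 + a_j z g_{j+1} g_j`. Since `a_j → 0`, for large `j` the coefficients of `g_j`
are at most `catalan k * ε ^ k`, so `g_j` converges beyond `d`. One then descends level by level: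
if `g_j(d) < ∞` and `g_{j+1}` converges beyond `d`, the identity forces `a_j d g_{j+1}(d) < 1`;
by continuity this persists slightly to the right of `d`, where `g_j = 1 / (1 - a_j z g_{j+1})`
therefore converges too. Hence `g(d) < ∞` forces `M > d`, and conversely the series converges
inside its disc of convergence.
-/

theorem endH_append (s t : List Bool) (j : ℕ) : endH j (s ++ t) = endH (endH j s) t := by
  induction s generalizing j with
  | nil => rfl
  | cons b s ih => cases b <;> exact ih _

theorem isDyck_append (s t : List Bool) (j : ℕ) :
    isDyck j (s ++ t) = (isDyck j s && isDyck (endH j s) t) := by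
  induction s generalizing j with
  | nil => rfl
  | cons b s ih => cases b <;> simp [isDyck, endH, ih, Bool.and_assoc]

theorem dwt_append (u v : ℕ → ℝ) (s t : List Bool) (j : ℕ) :
    dwt u v j (s ++ t) = dwt u v j s * dwt u v (endH j s) t := by
  induction s generalizing j with
  | nil => simp [dwt, endH]
  | cons b s ih => cases b <;> simp [dwt, endH, ih, mul_assoc]

theorem dwt_nonneg {u v : ℕ → ℝ} (hu : ∀ i, 0 ≤ u i) (hv : ∀ i, 0 ≤ v i) (s : List Bool)
    (j : ℕ) : 0 ≤ dwt u v j s := by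
  induction s generalizing j with
  | nil => exact zero_le_one
  | cons b s ih => cases b <;> exact mul_nonneg (by solve_by_elim) (ih _)

theorem isDyck_add {j : ℕ} {s : List Bool} (h : isDyck j s) (m : ℕ) : isDyck (j + m) s := by
  induction s generalizing j with
  | nil => rfl
  | cons b s ih =>
    cases b
    · simp only [isDyck, Bool.and_eq_true, decide_eq_true_eq] at h ⊢
      exact ⟨by omega, by simpa [show j + m - 1 = j - 1 + m by omega] using ih h.2⟩
    · simpa [isDyck, Nat.add_right_comm] using ih h

theorem endH_add {j : ℕ} {s : List Bool} (h : isDyck j s) (m : ℕ) :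
    endH (j + m) s = endH j s + m := by
  induction s generalizing j with
  | nil => rfl
  | cons b s ih =>
    cases b
    · simp only [isDyck, Bool.and_eq_true, decide_eq_true_eq] at h
      simpa [endH, show j + m - 1 = j - 1 + m by omega] using ih h.2
    · simpa [endH, Nat.add_right_comm] using ih h

theorem dwt_add_one (u v : ℕ → ℝ) {j : ℕ} {s : List Bool} (h : isDyck j s) :
    dwt u v (j + 1) s = dwt (fun i => u (i + 1)) (fun i => v (i + 1)) j s := by
  induction s generalizing j with
  | nil => rfl
  | cons b s ih =>
    cases b
    · simp only [isDyck, Bool.and_eq_true, decide_eq_true_eq] at h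
      obtain ⟨j, rfl⟩ := Nat.exists_eq_add_of_le' h.1
      simp only [dwt, Nat.add_sub_cancel] at h ⊢
      rw [ih h.2]
    · simp only [dwt]
      rw [ih h]

theorem endH_add_length_add_mod_two {j : ℕ} {s : List Bool} (h : isDyck j s) :
    (endH j s + s.length + j) % 2 = 0 := by
  induction s generalizing j with
  | nil => simp only [endH, List.length_nil]; omega
  | cons b s ih =>
    cases b
    · simp only [isDyck, Bool.and_eq_true, decide_eq_true_eq] at h
      have := ih h.2
      simp only [endH, List.length_cons]
      omega
    · have := ih h
      simp only [endH, List.length_cons]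
      omega

abbrev IsDyckPath (s : List Bool) : Prop := isDyck 0 s = true ∧ endH 0 s = 0

theorem IsDyckPath.even_length {s : List Bool} (h : IsDyckPath s) : Even s.length := by
  have := endH_add_length_add_mod_two h.1
  rw [h.2] at this
  exact Nat.even_iff.mpr (by omega)

theorem IsDyckPath.isDyck_one {A : List Bool} (h : IsDyckPath A) : isDyck 1 A := by
  simpa using isDyck_add h.1 1

theorem IsDyckPath.endH_one {A : List Bool} (h : IsDyckPath A) : endH 1 A = 1 := by
  simpa [h.2] using endH_add h.1 1

theorem IsDyckPath.isDyck_glue {A : List Bool} (hA : IsDyckPath A) (B : List Bool) :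
    isDyck 0 (true :: (A ++ false :: B)) = isDyck 0 B := by
  simp [isDyck, isDyck_append, hA.isDyck_one, hA.endH_one]

theorem IsDyckPath.endH_glue {A : List Bool} (hA : IsDyckPath A) (B : List Bool) :
    endH 0 (true :: (A ++ false :: B)) = endH 0 B := by
  simp [endH, endH_append, hA.endH_one]

theorem IsDyckPath.dwt_glue (u v : ℕ → ℝ) {A : List Bool} (hA : IsDyckPath A) (B : List Bool) :
    dwt u v 0 (true :: (A ++ false :: B)) =
      u 0 * v 0 * dwt (fun i => u (i + 1)) (fun i => v (i + 1)) 0 A * dwt u v 0 B := by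
  simp only [dwt, dwt_append, hA.endH_one, ← dwt_add_one u v hA.1]
  ring

theorem IsDyckPath.glue {A B : List Bool} (hA : IsDyckPath A) (hB : IsDyckPath B) :
    IsDyckPath (true :: (A ++ false :: B)) := by
  rw [IsDyckPath, hA.isDyck_glue, hA.endH_glue]
  exact hB

theorem isDyck_append_false_cons {A : List Bool} (hA : IsDyckPath A) (C : List Bool) :
    isDyck 0 (A ++ false :: C) = false := by
  simp [isDyck_append, hA.2, isDyck]

theorem exists_dyckPath_append_false_cons {j : ℕ} {s : List Bool} (hs : isDyck (j + 1) s)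
    (he : endH (j + 1) s ≤ j) : ∃ A B, s = A ++ false :: B ∧ IsDyckPath A := by
  induction hn : s.length using Nat.strong_induction_on generalizing j s with
  | _ n ih =>
  match s with
  | [] => simp [endH] at he
  | false :: B => exact ⟨[], B, rfl, rfl, rfl⟩
  | true :: t =>
    obtain ⟨A, B, rfl, hA⟩ := ih _ (by simp [← hn]) (j := j + 1) hs (he.trans j.le_succ) rfl
    have hAe : endH (j + 2) A = j + 2 := by simpa [hA.2] using endH_add hA.1 (j + 2)
    simp only [isDyck, isDyck_append, hAe, Bool.and_eq_true, decide_eq_true_eq] at hs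
    simp only [endH, endH_append, hAe] at he
    obtain ⟨A', B', rfl, hA'⟩ := ih _
      (by simp only [← hn, List.length_cons, List.length_append]; omega) hs.2.2 he rfl
    exact ⟨true :: (A ++ false :: A'), B', by simp, hA.glue hA'⟩

theorem append_false_cons_inj {A A' B B' : List Bool} (hA : IsDyckPath A) (hA' : IsDyckPath A')
    (h : A ++ false :: B = A' ++ false :: B') : A = A' ∧ B = B' := by
  rcases List.append_eq_append_iff.mp h with ⟨_ | ⟨b, C⟩, rfl, h'⟩ | ⟨_ | ⟨b, C⟩, rfl, h'⟩
  · simpa using h'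
  · obtain ⟨rfl, rfl⟩ := List.cons_eq_cons.mp h'
    simpa [isDyck_append_false_cons hA] using hA'.1
  · simpa using h'.symm
  · obtain ⟨rfl, rfl⟩ := List.cons_eq_cons.mp h'
    simpa [isDyck_append_false_cons hA'] using hA.1

def dyckPaths (n : ℕ) : Finset (List Bool) :=
  {s ∈ (univ : Finset (Fin n → Bool)).image List.ofFn | IsDyckPath s}

theorem mem_dyckPaths {n : ℕ} {s : List Bool} :
    s ∈ dyckPaths n ↔ s.length = n ∧ IsDyckPath s := by
  simp only [dyckPaths, mem_filter, mem_image, mem_univ, true_and, and_congr_left_iff]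
  refine fun _ => ⟨?_, ?_⟩
  · rintro ⟨γ, rfl⟩
    exact List.length_ofFn
  · rintro rfl
    exact ⟨s.get, List.ofFn_get s⟩

noncomputable def weightedCatalan (u v : ℕ → ℝ) (k : ℕ) : ℝ :=
  ∑ s ∈ dyckPaths (2 * k), dwt u v 0 s

theorem Ck_eq_weightedCatalan (lam rho : ℕ → ℝ) (k : ℕ) :
    Ck lam rho k = weightedCatalan (uWt lam rho) (vWt lam rho) k := by
  rw [Ck, weightedCatalan, dyckPaths, sum_filter, sum_image fun _ _ _ _ h => List.ofFn_injective h]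

theorem weightedCatalan_zero (u v : ℕ → ℝ) : weightedCatalan u v 0 = 1 := by
  have : dyckPaths 0 = {[]} := by
    ext s
    simp only [mem_dyckPaths, List.length_eq_zero_iff, mem_singleton, and_iff_left_iff_imp]
    rintro rfl
    exact ⟨rfl, rfl⟩
  simp [weightedCatalan, this, dwt]

theorem weightedCatalan_nonneg {u v : ℕ → ℝ} (hu : ∀ i, 0 ≤ u i) (hv : ∀ i, 0 ≤ v i) (k : ℕ) :
    0 ≤ weightedCatalan u v k :=
  sum_nonneg fun s _ => dwt_nonneg hu hv s 0

theorem sum_dyckPaths_succ {M : Type*} [AddCommMonoid M] (F : List Bool → M) (k : ℕ) :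
    ∑ s ∈ dyckPaths (2 * (k + 1)), F s =
      ∑ x ∈ (antidiagonal k).sigma fun p => dyckPaths (2 * p.1) ×ˢ dyckPaths (2 * p.2),
        F (true :: (x.2.1 ++ false :: x.2.2)) := by
  symm
  refine sum_bij (fun x _ => true :: (x.2.1 ++ false :: x.2.2)) ?_ ?_ ?_ fun _ _ => rfl
  · rintro ⟨p, ⟨A, B⟩⟩ hx
    simp only [mem_sigma, HasAntidiagonal.mem_antidiagonal, mem_product, mem_dyckPaths] at hx ⊢
    obtain ⟨rfl, ⟨hAl, hA⟩, hBl, hB⟩ := hx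
    exact ⟨by simp only [List.length_cons, List.length_append]; omega, hA.glue hB⟩
  · rintro ⟨p, ⟨A, B⟩⟩ hx ⟨p', ⟨A', B'⟩⟩ hx' h
    simp only [mem_sigma, HasAntidiagonal.mem_antidiagonal, mem_product, mem_dyckPaths] at hx hx'
    obtain ⟨rfl, rfl⟩ := append_false_cons_inj hx.2.1.2 hx'.2.1.2 (List.cons.inj h).2
    have : p = p' := by ext <;> omega
    subst this
    rfl
  · intro s hs
    obtain ⟨hl, hD, he⟩ := mem_dyckPaths.mp hs
    rcases s with _ | ⟨_ | _, t⟩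
    · simp at hl
    · simp [isDyck] at hD
    obtain ⟨A, B, rfl, hA⟩ := exists_dyckPath_append_false_cons (j := 0) hD he.le
    have hB : IsDyckPath B := by
      rw [IsDyckPath, ← hA.isDyck_glue, ← hA.endH_glue]
      exact ⟨hD, he⟩
    obtain ⟨i, hi⟩ := hA.even_length
    refine ⟨⟨(i, k - i), A, B⟩, ?_, rfl⟩
    simp only [List.length_cons, List.length_append] at hl
    simp only [mem_sigma, HasAntidiagonal.mem_antidiagonal, mem_product, mem_dyckPaths]
    exact ⟨by omega, ⟨by omega, hA⟩, by omega, hB⟩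

theorem weightedCatalan_succ (u v : ℕ → ℝ) (k : ℕ) :
    weightedCatalan u v (k + 1) = u 0 * v 0 * ∑ p ∈ antidiagonal k,
      weightedCatalan (fun i => u (i + 1)) (fun i => v (i + 1)) p.1 * weightedCatalan u v p.2 := by
  rw [weightedCatalan, sum_dyckPaths_succ, sum_sigma, mul_sum]
  refine sum_congr rfl fun p _ => ?_
  rw [weightedCatalan, weightedCatalan, sum_mul_sum, sum_product, mul_sum]
  refine sum_congr rfl fun A hA => ?_
  rw [mul_sum]
  refine sum_congr rfl fun B _ => ?_
  rw [(mem_dyckPaths.mp hA).2.dwt_glue, mul_assoc]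

/-- `g` is the coefficient sequence of `G = 1 / (1 - a z F)`, where `F` is the generating
function of `f`. -/
structure CatalanRecursion (a : ℝ) (f g : ℕ → ℝ) : Prop where
  zero : g 0 = 1
  succ : ∀ k, g (k + 1) = a * ∑ p ∈ antidiagonal k, f p.1 * g p.2

theorem sum_range_sum_antidiagonal_le {f g : ℕ → ℝ} (hf : ∀ i, 0 ≤ f i) (hg : ∀ i, 0 ≤ g i)
    (K : ℕ) : ∑ k ∈ range K, ∑ p ∈ antidiagonal k, f p.1 * g p.2 ≤
      (∑ i ∈ range K, f i) * ∑ j ∈ range K, g j := by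
  rw [sum_mul_sum, ← sum_product']
  refine le_of_eq_of_le (sum_congr rfl fun k hk => sum_congr ?_ fun _ _ => rfl)
    (sum_fiberwise_le_sum_of_sum_fiber_nonneg (g := fun p : ℕ × ℕ => p.1 + p.2)
      fun _ _ => sum_nonneg fun p _ => mul_nonneg (hf p.1) (hg p.2))
  ext ⟨i, j⟩
  simp only [mem_range] at hk
  simp only [HasAntidiagonal.mem_antidiagonal, mem_filter, mem_product, mem_range]
  omega

theorem summable_mul_pow_of_le {f : ℕ → ℝ} (hf : ∀ i, 0 ≤ f i) {x y : ℝ} (hy : 0 ≤ y)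
    (hyx : y ≤ x) (hx : Summable fun k => f k * x ^ k) : Summable fun k => f k * y ^ k :=
  hx.of_nonneg_of_le (fun k => mul_nonneg (hf k) (pow_nonneg hy k))
    fun k => mul_le_mul_of_nonneg_left (pow_le_pow_left₀ hy hyx k) (hf k)

open scoped Topology

namespace CatalanRecursion

variable {a : ℝ} {f g : ℕ → ℝ}

theorem mul_le_succ (h : CatalanRecursion a f g) (ha : 0 ≤ a) (hf : ∀ i, 0 ≤ f i)
    (hg : ∀ i, 0 ≤ g i) (k : ℕ) : a * f k ≤ g (k + 1) := by
  rw [h.succ]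
  refine mul_le_mul_of_nonneg_left ?_ ha
  have := single_le_sum (f := fun p : ℕ × ℕ => f p.1 * g p.2)
    (fun p _ => mul_nonneg (hf p.1) (hg p.2)) (show (k, 0) ∈ antidiagonal k by simp)
  rwa [h.zero, mul_one] at this

theorem succ_mul_pow (h : CatalanRecursion a f g) (x : ℝ) (k : ℕ) :
    g (k + 1) * x ^ (k + 1) =
      a * x * ∑ p ∈ antidiagonal k, f p.1 * x ^ p.1 * (g p.2 * x ^ p.2) := by
  simp only [h.succ, mul_sum, sum_mul]
  refine sum_congr rfl fun p hp => ?_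
  rw [← HasAntidiagonal.mem_antidiagonal.mp hp]
  ring

theorem summable_left_of_summable (h : CatalanRecursion a f g) (ha : 0 < a) (hf : ∀ i, 0 ≤ f i)
    (hg : ∀ i, 0 ≤ g i) {x : ℝ} (hx : 0 < x) (hG : Summable fun k => g k * x ^ k) :
    Summable fun k => f k * x ^ k := by
  have hG1 := ((summable_nat_add_iff 1).mpr hG).mul_left (a * x)⁻¹
  refine hG1.of_nonneg_of_le (fun k => mul_nonneg (hf k) (pow_nonneg hx.le k)) fun k => ?_
  rw [inv_mul_eq_div, le_div_iff₀ (by positivity)]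
  calc f k * x ^ k * (a * x) = a * f k * x ^ (k + 1) := by ring
    _ ≤ g (k + 1) * x ^ (k + 1) :=
      mul_le_mul_of_nonneg_right (h.mul_le_succ ha.le hf hg k) (pow_nonneg hx.le (k + 1))

theorem summable_of_eq_zero (h : CatalanRecursion 0 f g) (x : ℝ) :
    Summable fun k => g k * x ^ k :=
  (hasSum_single 0 fun k hk => by
    obtain ⟨k, rfl⟩ := Nat.exists_eq_succ_of_ne_zero hk
    rw [h.succ, zero_mul, zero_mul]).summable

theorem tsum_eq_one_add (h : CatalanRecursion a f g) (hf : ∀ i, 0 ≤ f i) (hg : ∀ i, 0 ≤ g i) {x : ℝ}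
    (hx : 0 ≤ x) (hF : Summable fun k => f k * x ^ k) (hG : Summable fun k => g k * x ^ k) :
    ∑' k, g k * x ^ k = 1 + a * x * ((∑' k, f k * x ^ k) * ∑' k, g k * x ^ k) := by
  have hnorm {c : ℕ → ℝ} (hc : ∀ i, 0 ≤ c i) (hC : Summable fun k => c k * x ^ k) :
      Summable fun k => ‖c k * x ^ k‖ :=
    hC.congr fun k => (Real.norm_of_nonneg (mul_nonneg (hc k) (pow_nonneg hx k))).symm
  rw [tsum_mul_tsum_eq_tsum_sum_antidiagonal_of_summable_norm (hnorm hf hF) (hnorm hg hG),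
    ← tsum_mul_left, hG.tsum_eq_zero_add, h.zero]
  simp only [pow_zero, mul_one, h.succ_mul_pow]

theorem mul_tsum_lt_one (h : CatalanRecursion a f g) (hf : ∀ i, 0 ≤ f i) (hg : ∀ i, 0 ≤ g i)
    {x : ℝ} (hx : 0 ≤ x) (hF : Summable fun k => f k * x ^ k)
    (hG : Summable fun k => g k * x ^ k) : a * x * ∑' k, f k * x ^ k < 1 := by
  have heq := h.tsum_eq_one_add hf hg hx hF hG
  have hG1 : 1 ≤ ∑' k, g k * x ^ k := by
    simpa [h.zero] using hG.le_tsum 0 fun k _ => mul_nonneg (hg k) (pow_nonneg hx k)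
  by_contra! hc
  nlinarith

theorem sum_range_le (h : CatalanRecursion a f g) (ha : 0 ≤ a) (hf : ∀ i, 0 ≤ f i)
    (hg : ∀ i, 0 ≤ g i) {x : ℝ} (hx : 0 ≤ x) (hF : Summable fun k => f k * x ^ k)
    (hc : a * x * ∑' k, f k * x ^ k < 1) (K : ℕ) :
    ∑ k ∈ range K, g k * x ^ k ≤ (1 - a * x * ∑' k, f k * x ^ k)⁻¹ := by
  set c := a * x * ∑' k, f k * x ^ k
  have hQ : 1 + c * (1 - c)⁻¹ = (1 - c)⁻¹ := by
    field_simp [(sub_pos.mpr hc).ne']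
    ring
  have hfx i : 0 ≤ f i * x ^ i := mul_nonneg (hf i) (pow_nonneg hx i)
  have hgx i : 0 ≤ g i * x ^ i := mul_nonneg (hg i) (pow_nonneg hx i)
  induction K with
  | zero => simpa using (sub_pos.mpr hc).le
  | succ K ih =>
    rw [sum_range_succ', h.zero, pow_zero, mul_one, ← hQ, add_comm 1]
    gcongr
    calc ∑ k ∈ range K, g (k + 1) * x ^ (k + 1)
        = a * x * ∑ k ∈ range K, ∑ p ∈ antidiagonal k, f p.1 * x ^ p.1 * (g p.2 * x ^ p.2) := by
          simp only [h.succ_mul_pow, mul_sum]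
      _ ≤ a * x * ((∑ i ∈ range K, f i * x ^ i) * ∑ j ∈ range K, g j * x ^ j) := by
          gcongr
          exact sum_range_sum_antidiagonal_le hfx hgx K
      _ ≤ a * x * ((∑' k, f k * x ^ k) * (1 - c)⁻¹) :=
          mul_le_mul_of_nonneg_left (mul_le_mul (hF.sum_le_tsum _ fun i _ => hfx i) ih
            (sum_nonneg fun j _ => hgx j) (tsum_nonneg hfx)) (by positivity)
      _ = c * (1 - c)⁻¹ := by ring

theorem summable_of_mul_tsum_lt_one (h : CatalanRecursion a f g) (ha : 0 ≤ a)
    (hf : ∀ i, 0 ≤ f i) (hg : ∀ i, 0 ≤ g i) {x : ℝ} (hx : 0 ≤ x)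
    (hF : Summable fun k => f k * x ^ k) (hc : a * x * ∑' k, f k * x ^ k < 1) :
    Summable fun k => g k * x ^ k :=
  summable_of_sum_range_le (fun k => mul_nonneg (hg k) (pow_nonneg hx k))
    (h.sum_range_le ha hf hg hx hF hc)

theorem exists_gt_summable (h : CatalanRecursion a f g) (ha : 0 ≤ a) (hf : ∀ i, 0 ≤ f i)
    (hg : ∀ i, 0 ≤ g i) {d x : ℝ} (hd : 0 ≤ d) (hdx : d < x)
    (hF : Summable fun k => f k * x ^ k) (hG : Summable fun k => g k * d ^ k) :
    ∃ y, d < y ∧ Summable fun k => g k * y ^ k := by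
  have hcont : ContinuousOn (fun y => a * y * ∑' k, f k * y ^ k) (Set.Icc 0 x) := by
    refine (continuousOn_const.mul continuousOn_id).mul (continuousOn_tsum (fun k => by fun_prop)
      hF fun k y hy => ?_)
    rw [Real.norm_of_nonneg (mul_nonneg (hf k) (pow_nonneg hy.1 k))]
    exact mul_le_mul_of_nonneg_left (pow_le_pow_left₀ hy.1 hy.2 k) (hf k)
  have hlt : ∀ᶠ y in 𝓝[>] d, a * y * ∑' k, f k * y ^ k < 1 :=
    ((hcont d ⟨hd, hdx.le⟩).mono_of_mem_nhdsWithin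
      (mem_of_superset (Ioc_mem_nhdsGT hdx) fun y hy => ⟨hd.trans hy.1.le, hy.2⟩)).eventually_lt
      continuousWithinAt_const (h.mul_tsum_lt_one hf hg hd
        (summable_mul_pow_of_le hf hd hdx.le hF) hG)
  obtain ⟨y, hy, ⟨hdy, hyx⟩⟩ := (hlt.and (Ioc_mem_nhdsGT hdx)).exists
  exact ⟨y, hdy, h.summable_of_mul_tsum_lt_one ha hf hg (hd.trans hdy.le)
    (summable_mul_pow_of_le hf (hd.trans hdy.le) hyx hF) hy⟩

end CatalanRecursion

theorem weightedCatalan_catalanRecursion (u v : ℕ → ℝ) :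
    CatalanRecursion (u 0 * v 0) (weightedCatalan (fun i => u (i + 1)) (fun i => v (i + 1)))
      (weightedCatalan u v) :=
  ⟨weightedCatalan_zero u v, weightedCatalan_succ u v⟩

theorem catalan_le_four_pow (n : ℕ) : catalan n ≤ 4 ^ n :=
  calc catalan n ≤ (n + 1) * catalan n := Nat.le_mul_of_pos_left _ n.succ_pos
    _ = n.centralBinom := succ_mul_catalan_eq_centralBinom n
    _ ≤ 4 ^ n := Nat.centralBinom_le_four_pow n

theorem weightedCatalan_le_catalan_mul_pow {u v : ℕ → ℝ} (hu : ∀ i, 0 ≤ u i)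
    (hv : ∀ i, 0 ≤ v i) {ε : ℝ} (hε : ∀ i, u i * v i ≤ ε) (k : ℕ) :
    weightedCatalan u v k ≤ catalan k * ε ^ k := by
  induction k using Nat.strong_induction_on generalizing u v with
  | _ k ih =>
  rcases k with _ | k
  · simp [weightedCatalan_zero]
  have hε0 : 0 ≤ ε := (mul_nonneg (hu 0) (hv 0)).trans (hε 0)
  rw [weightedCatalan_succ, catalan_succ', Nat.cast_sum, sum_mul]
  calc u 0 * v 0 * ∑ p ∈ antidiagonal k,
        weightedCatalan (fun i => u (i + 1)) (fun i => v (i + 1)) p.1 * weightedCatalan u v p.2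
      ≤ ε * ∑ p ∈ antidiagonal k, catalan p.1 * ε ^ p.1 * (catalan p.2 * ε ^ p.2) := by
        refine mul_le_mul (hε 0) (sum_le_sum fun p hp => ?_)
          (sum_nonneg fun p _ => mul_nonneg (weightedCatalan_nonneg (fun _ => hu _)
            (fun _ => hv _) _) (weightedCatalan_nonneg hu hv _)) hε0
        have hp := HasAntidiagonal.mem_antidiagonal.mp hp
        exact mul_le_mul (ih _ (by omega) (fun _ => hu _) (fun _ => hv _) fun _ => hε _)
          (ih _ (by omega) hu hv hε) (weightedCatalan_nonneg hu hv _) (by positivity)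
    _ = ∑ p ∈ antidiagonal k, ((catalan p.1 * catalan p.2 : ℕ) : ℝ) * ε ^ (k + 1) := by
        rw [mul_sum]
        refine sum_congr rfl fun p hp => ?_
        rw [← HasAntidiagonal.mem_antidiagonal.mp hp]
        push_cast
        ring

theorem summable_weightedCatalan_mul_pow {u v : ℕ → ℝ} (hu : ∀ i, 0 ≤ u i) (hv : ∀ i, 0 ≤ v i)
    {ε x : ℝ} (hε : ∀ i, u i * v i ≤ ε) (hx : 0 ≤ x) (hεx : 4 * ε * x < 1) :
    Summable fun k => weightedCatalan u v k * x ^ k := by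
  have hε0 : 0 ≤ ε := (mul_nonneg (hu 0) (hv 0)).trans (hε 0)
  refine (summable_geometric_of_lt_one (by positivity) hεx).of_nonneg_of_le
    (fun k => mul_nonneg (weightedCatalan_nonneg hu hv k) (pow_nonneg hx k)) fun k => ?_
  calc weightedCatalan u v k * x ^ k ≤ catalan k * ε ^ k * x ^ k := by
        gcongr
        exact weightedCatalan_le_catalan_mul_pow hu hv hε k
    _ ≤ 4 ^ k * ε ^ k * x ^ k := by
        gcongr
        exact_mod_cast catalan_le_four_pow k
    _ = (4 * ε * x) ^ k := by rw [mul_pow, mul_pow]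

theorem exists_gt_summable_weightedCatalan_of_shift {u v : ℕ → ℝ} (hu : ∀ i, 0 ≤ u i)
    (hv : ∀ i, 0 ≤ v i) {d : ℝ} (hd : 0 < d) (n : ℕ)
    (hn : ∃ x, d < x ∧
      Summable fun k => weightedCatalan (fun i => u (i + n)) (fun i => v (i + n)) k * x ^ k)
    (hs : Summable fun k => weightedCatalan u v k * d ^ k) :
    ∃ y, d < y ∧ Summable fun k => weightedCatalan u v k * y ^ k := by
  induction n generalizing u v with
  | zero => simpa using hn
  | succ n ih =>
    have hrec := weightedCatalan_catalanRecursion u v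
    have hu' := fun i => hu (i + 1)
    have hv' := fun i => hv (i + 1)
    rcases (mul_nonneg (hu 0) (hv 0)).eq_or_lt with h0 | hpos
    · exact ⟨d + 1, by linarith, (h0 ▸ hrec).summable_of_eq_zero _⟩
    obtain ⟨x, hdx, hx⟩ := ih hu' hv' (by simpa only [add_assoc] using hn)
      (hrec.summable_left_of_summable hpos (weightedCatalan_nonneg hu' hv')
        (weightedCatalan_nonneg hu hv) hd hs)
    exact hrec.exists_gt_summable hpos.le (weightedCatalan_nonneg hu' hv')
      (weightedCatalan_nonneg hu hv) hd.le hdx hx hs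

theorem exists_gt_summable_weightedCatalan {u v : ℕ → ℝ} (hu : ∀ i, 0 ≤ u i)
    (hv : ∀ i, 0 ≤ v i) (ha : Tendsto (fun j => u j * v j) atTop (𝓝 0)) {d : ℝ} (hd : 0 < d)
    (hs : Summable fun k => weightedCatalan u v k * d ^ k) :
    ∃ y, d < y ∧ Summable fun k => weightedCatalan u v k * y ^ k := by
  obtain ⟨n, hn⟩ := eventually_atTop.mp
    (ha.eventually (ge_mem_nhds (by positivity : (0 : ℝ) < 1 / (8 * (d + 1)))))
  refine exists_gt_summable_weightedCatalan_of_shift hu hv hd n ⟨d + 1, by linarith, ?_⟩ hs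
  refine summable_weightedCatalan_mul_pow (fun _ => hu _) (fun _ => hv _)
    (fun i => hn (i + n) (by omega)) (by linarith) ?_
  rw [show 4 * (1 / (8 * (d + 1))) * (d + 1) = 1 / 2 by field_simp; ring]
  norm_num

theorem Dd_nonneg {rho : ℕ → ℝ} (hrho : ∀ i, 1 ≤ i → 0 ≤ rho i) (j : ℕ) : 0 ≤ Dd rho j :=
  sum_nonneg fun i hi => hrho i (mem_Icc.mp hi).1

theorem uWt_nonneg {lam rho : ℕ → ℝ} (hlam : ∀ i, 1 ≤ i → 0 ≤ lam i)
    (hrho : ∀ i, 1 ≤ i → 0 ≤ rho i) (j : ℕ) : 0 ≤ uWt lam rho j :=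
  div_nonneg (hlam _ (by omega)) (by linarith [hlam (j + 1) (by omega), Dd_nonneg hrho (j + 1)])

theorem vWt_nonneg {lam rho : ℕ → ℝ} (hlam : ∀ i, 1 ≤ i → 0 ≤ lam i)
    (hrho : ∀ i, 1 ≤ i → 0 ≤ rho i) (j : ℕ) : 0 ≤ vWt lam rho j :=
  div_nonneg zero_le_one (by linarith [hlam (j + 2) (by omega), Dd_nonneg hrho (j + 2)])

theorem norm_gSeries (lam rho : ℕ → ℝ) (n : ℕ) : ‖gSeries lam rho n‖ = |Ck lam rho n| := by
  rw [gSeries, FormalMultilinearSeries.ofScalars_norm, Complex.norm_real, Real.norm_eq_abs]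

/-- **Lemma 3.3.** If `a_j = u(j)v(j) → 0`, then for every real `d > 0`:
`M ≤ d` if and only if the series `g(d) = Σ_k C_k d^k` diverges. -/
theorem M_le_iff_diverges (lam rho : ℕ → ℝ)
    (hlam : ∀ i, 1 ≤ i → 0 ≤ lam i) (hrho : ∀ i, 1 ≤ i → 0 ≤ rho i)
    (ha : Tendsto (fun j => uWt lam rho j * vWt lam rho j) atTop (nhds 0))
    (d : ℝ) (hd : 0 < d) :
    radiusM lam rho ≤ ENNReal.ofReal d ↔ ¬ Summable (fun k => Ck lam rho k * d ^ k) := by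
  have hu := uWt_nonneg hlam hrho
  have hv := vWt_nonneg hlam hrho
  have hnorm {x : ℝ} (hx : 0 ≤ x) :
      (fun n => ‖gSeries lam rho n‖ * (x.toNNReal : ℝ) ^ n) = fun k => Ck lam rho k * x ^ k := by
    ext n
    rw [norm_gSeries, Real.coe_toNNReal x hx, Ck_eq_weightedCatalan,
      abs_of_nonneg (weightedCatalan_nonneg hu hv n)]
  constructor
  · intro hM hs
    obtain ⟨y, hdy, hy⟩ := exists_gt_summable_weightedCatalan hu hv ha hd
      (by simpa only [Ck_eq_weightedCatalan] using hs)
    have hy0 := hd.trans hdy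
    have hyM : ENNReal.ofReal y ≤ radiusM lam rho :=
      (gSeries lam rho).le_radius_of_summable_norm
        (by simpa only [hnorm hy0.le, Ck_eq_weightedCatalan] using hy)
    exact ((ENNReal.ofReal_lt_ofReal_iff hy0).mpr hdy).not_ge (hyM.trans hM)
  · intro hs
    by_contra hM
    exact hs (hnorm hd.le ▸ (gSeries lam rho).summable_norm_mul_pow (not_le.mp hM))
end

section
/- (Divergence at the radius for meromorphically extendable nonnegative series) Let Σ_{n≥0} a_n z^n be a power series with real coefficients a_n ≥ 0 and radius of convergence M ∈ (0, ∞), and suppose there exists a function F meromorphic on ℂ that agrees with the sum of the series on {|z| < M}. Then Σ_{n≥0} a_n M^n = ∞. -/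
/-!
If `∑ aₙ Mⁿ` converged, the sum `S` of the series would be bounded on `‖z‖ < M`, so the
meromorphic extension `F` has a removable singularity at `M`: after correcting its value there it
is analytic on `ball 0 M ∪ ball M δ`, and this set contains the closed disc of radius `2ε` about
the real point `x = M - ε`. Re-expanding `S` around `x` produces nonnegative coefficients, and by
nonnegativity the double series `∑ₙ ∑ₖ (n choose k) aₙ x^(n-k) tᵏ` may be summed in either order
(Pringsheim's argument). The re-expanded series is the Taylor series of the extension at `x`, so it
converges for `t < 2ε`; summing it by rows, `∑ aₙ (x + t)ⁿ` converges with `x + t > M`, which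
contradicts `M` being the radius of convergence.
-/

open Metric Topology NNReal ENNReal FormalMultilinearSeries

section PowerSeries

variable {𝕜 : Type*} [NontriviallyNormedField 𝕜] {c : ℕ → 𝕜}

theorem norm_tsum_mul_pow_le {r : ℝ} (hs : Summable fun n => ‖c n‖ * r ^ n) {z : 𝕜}
    (hz : ‖z‖ ≤ r) : ‖∑' n, c n * z ^ n‖ ≤ ∑' n, ‖c n‖ * r ^ n :=
  tsum_of_norm_bounded hs.hasSum fun n => by
    rw [norm_mul, norm_pow]
    gcongr

theorem analyticOnNhd_tsum_mul_pow [CompleteSpace 𝕜] {r : ℝ≥0}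
    (hs : Summable fun n => ‖c n‖ * r ^ n) :
    AnalyticOnNhd 𝕜 (fun z => ∑' n, c n * z ^ n) (ball 0 r) := by
  intro z hz
  have hrad : (r : ℝ≥0∞) ≤ (ofScalars 𝕜 c).radius :=
    le_radius_of_summable_norm _ (by simpa only [ofScalars_norm] using hs)
  have hz' : z ∈ eball 0 (ofScalars 𝕜 c).radius :=
    eball_subset_eball hrad (by rwa [eball_coe])
  have hsum : (ofScalars 𝕜 c).sum = fun z => ∑' n, c n * z ^ n := ofScalarsSum_eq_tsum c
  exact hsum ▸ ((ofScalars 𝕜 c).hasFPowerSeriesOnBall (pos_of_gt hz')).analyticAt_of_mem hz'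

end PowerSeries

theorem frequently_norm_lt_nhdsNE {E : Type*} [NormedAddCommGroup E] [NormedSpace ℝ E] {x : E}
    (hx : x ≠ 0) : ∃ᶠ z in 𝓝[≠] x, ‖z‖ < ‖x‖ := by
  have hx_cl : x ∈ closure (ball 0 ‖x‖) := by
    simp [closure_ball _ (norm_ne_zero_iff.2 hx)]
  rw [frequently_nhdsWithin_iff]
  refine (mem_closure_iff_frequently.1 hx_cl).mono fun z hz => ⟨mem_ball_zero_iff.1 hz, ?_⟩
  rintro rfl
  simp at hz

theorem MeromorphicAt.analyticAt_toMeromorphicNFAt_of_frequently_norm_le {𝕜 E : Type*}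
    [NontriviallyNormedField 𝕜] [NormedAddCommGroup E] [NormedSpace 𝕜 E] {f : 𝕜 → E} {x : 𝕜}
    {C : ℝ} (hf : MeromorphicAt f x) (h : ∃ᶠ z in 𝓝[≠] x, ‖f z‖ ≤ C) :
    AnalyticAt 𝕜 (toMeromorphicNFAt f x) x := by
  refine hf.meromorphicOrderAt_nonneg_iff_analyticAt_toMeromorphicNFAt.1 ?_
  by_contra! ho
  have htends :=
    tendsto_norm_atTop_iff_cobounded.2 (tendsto_cobounded_of_meromorphicOrderAt_neg ho)
  obtain ⟨z, hle, hlt⟩ := (h.and_eventually (htends.eventually_gt_atTop C)).exists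
  exact hle.not_gt hlt

section Reexpansion

/-- The coefficient of `yᵏ` in `aₙ (x + y)ⁿ`; for `k > n` the binomial coefficient vanishes, so the
truncated exponent `n - k` is harmless. -/
def shiftTerm {R : Type*} [CommSemiring R] (a : ℕ → R) (x : R) (n k : ℕ) : R :=
  n.choose k * a n * x ^ (n - k)

theorem Complex.ofReal_shiftTerm (a : ℕ → ℝ) (x : ℝ) (n k : ℕ) :
    ((shiftTerm a x n k : ℝ) : ℂ) = shiftTerm (fun n => (a n : ℂ)) x n k := by
  simp [shiftTerm]

theorem hasSum_shiftTerm_mul_pow {R : Type*} [CommSemiring R] [TopologicalSpace R]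
    (a : ℕ → R) (x y : R) (n : ℕ) :
    HasSum (fun k => shiftTerm a x n k * y ^ k) (a n * (x + y) ^ n) := by
  rw [add_comm, add_pow, Finset.mul_sum]
  convert hasSum_sum_of_ne_finset_zero (L := SummationFilter.unconditional ℕ)
    fun k hk => ?_ using 2 with k
  · simp only [shiftTerm]
    ring
  · simp [shiftTerm, Nat.choose_eq_zero_of_lt (by simpa using hk : n < k)]

variable {a : ℕ → ℝ} {x : ℝ}

theorem shiftTerm_nonneg (ha : ∀ n, 0 ≤ a n) (hx : 0 ≤ x) (n k : ℕ) :
    0 ≤ shiftTerm a x n k := by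
  have := ha n
  unfold shiftTerm
  positivity

/-- The coefficients of `∑ aₙ zⁿ` re-expanded around `x`, meaningful when each defining series
converges (otherwise the junk value `0` of `tsum` is taken). -/
noncomputable def shiftCoeff (a : ℕ → ℝ) (x : ℝ) (k : ℕ) : ℝ := ∑' n, shiftTerm a x n k

theorem shiftCoeff_nonneg (ha : ∀ n, 0 ≤ a n) (hx : 0 ≤ x) (k : ℕ) : 0 ≤ shiftCoeff a x k :=
  tsum_nonneg fun n => shiftTerm_nonneg ha hx n k

theorem summable_shiftTerm_prod_iff {t : ℝ} (ha : ∀ n, 0 ≤ a n) (hx : 0 ≤ x) (ht : 0 ≤ t) :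
    Summable (fun p : ℕ × ℕ => shiftTerm a x p.1 p.2 * t ^ p.2) ↔
      Summable fun n => a n * (x + t) ^ n := by
  rw [summable_prod_of_nonneg fun p => mul_nonneg (shiftTerm_nonneg ha hx _ _) (pow_nonneg ht _)]
  simp [(hasSum_shiftTerm_mul_pow _ _ _ _).summable, (hasSum_shiftTerm_mul_pow _ _ _ _).tsum_eq]

theorem summable_shiftTerm_prod_iff_shiftCoeff {t : ℝ} (ha : ∀ n, 0 ≤ a n) (hx : 0 ≤ x)
    (ht : 0 ≤ t) (hcol : ∀ k, Summable fun n => shiftTerm a x n k) :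
    Summable (fun p : ℕ × ℕ => shiftTerm a x p.1 p.2 * t ^ p.2) ↔
      Summable fun k => shiftCoeff a x k * t ^ k := by
  rw [← (Equiv.prodComm ℕ ℕ).summable_iff]
  simp only [Function.comp_def, Equiv.prodComm_apply, Prod.fst_swap, Prod.snd_swap]
  rw [summable_prod_of_nonneg fun p => mul_nonneg (shiftTerm_nonneg ha hx _ _) (pow_nonneg ht _)]
  simp only [shiftCoeff, (hcol _).mul_right, implies_true, true_and]
  congr! 2 with k
  exact tsum_mul_right

theorem summable_shiftTerm {r : ℝ} (ha : ∀ n, 0 ≤ a n) (hx : 0 ≤ x) (hr : 0 < r)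
    (hs : Summable fun n => a n * (x + r) ^ n) (k : ℕ) :
    Summable fun n => shiftTerm a x n k :=
  (summable_mul_right_iff (pow_ne_zero k hr.ne')).1
    (((summable_shiftTerm_prod_iff ha hx hr.le).2 hs).prod_symm.prod_factor k)

theorem hasSum_shiftCoeff_mul_pow {r : ℝ} (ha : ∀ n, 0 ≤ a n) (hx : 0 ≤ x) (hr : 0 < r)
    (hs : Summable fun n => a n * (x + r) ^ n) {y : ℂ} (hy : ‖y‖ ≤ r) :
    HasSum (fun k => (shiftCoeff a x k : ℂ) * y ^ k) (∑' n, (a n : ℂ) * (x + y) ^ n) := by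
  have hf : Summable fun p : ℕ × ℕ => ((shiftTerm a x p.1 p.2 : ℝ) : ℂ) * y ^ p.2 := by
    refine ((summable_shiftTerm_prod_iff ha hx hr.le).2 hs).of_norm_bounded fun p => ?_
    rw [norm_mul, norm_pow, Complex.norm_real, Real.norm_of_nonneg (shiftTerm_nonneg ha hx _ _)]
    exact mul_le_mul_of_nonneg_left (pow_le_pow_left₀ (norm_nonneg y) hy _)
      (shiftTerm_nonneg ha hx _ _)
  obtain ⟨T, hT⟩ := hf
  have hrows : HasSum (fun n => (a n : ℂ) * (x + y) ^ n) T :=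
    hT.prod_fiberwise fun n => by
      simp only [Complex.ofReal_shiftTerm]
      exact hasSum_shiftTerm_mul_pow _ _ _ _
  have hcols : ∀ k, HasSum (fun n => ((shiftTerm a x n k : ℝ) : ℂ) * y ^ k)
      ((shiftCoeff a x k : ℂ) * y ^ k) := fun k =>
    (Complex.hasSum_ofReal.2 (summable_shiftTerm ha hx hr hs k).hasSum).mul_right _
  rw [hrows.tsum_eq]
  exact ((Equiv.prodComm ℕ ℕ).hasSum_iff.2 hT).prod_fiberwise hcols

theorem norm_ofScalars_shiftCoeff (ha : ∀ n, 0 ≤ a n) (hx : 0 ≤ x) (k : ℕ) :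
    ‖ofScalars ℂ (fun k => (shiftCoeff a x k : ℂ)) k‖ = shiftCoeff a x k := by
  rw [ofScalars_norm, Complex.norm_real, Real.norm_of_nonneg (shiftCoeff_nonneg ha hx k)]

theorem hasFPowerSeriesOnBall_shiftCoeff {r : ℝ≥0} (ha : ∀ n, 0 ≤ a n) (hx : 0 ≤ x)
    (hr : 0 < r) (hs : Summable fun n => a n * (x + r) ^ n) :
    HasFPowerSeriesOnBall (fun z : ℂ => ∑' n, (a n : ℂ) * z ^ n)
      (ofScalars ℂ fun k => (shiftCoeff a x k : ℂ)) x r where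
  r_le := by
    refine le_radius_of_summable_norm _ ?_
    simp only [norm_ofScalars_shiftCoeff ha hx]
    exact (summable_shiftTerm_prod_iff_shiftCoeff ha hx r.coe_nonneg
      (summable_shiftTerm ha hx hr hs)).1 ((summable_shiftTerm_prod_iff ha hx r.coe_nonneg).2 hs)
  r_pos := by simpa using hr
  hasSum {y} hy := by
    simp only [ofScalars_apply_eq, smul_eq_mul]
    exact hasSum_shiftCoeff_mul_pow ha hx hr hs (by exact_mod_cast (mem_eball_zero_iff.1 hy).le)

theorem summable_of_differentiableOn_closedBall {r R t : ℝ} (ha : ∀ n, 0 ≤ a n) (hx : 0 ≤ x)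
    (hr : 0 < r) (hs : Summable fun n => a n * (x + r) ^ n) {H : ℂ → ℂ}
    (hH : DifferentiableOn ℂ H (closedBall (x : ℂ) R))
    (hHS : H =ᶠ[𝓝 (x : ℂ)] fun z => ∑' n, (a n : ℂ) * z ^ n) (ht : 0 ≤ t) (htR : t < R) :
    Summable fun n => a n * (x + t) ^ n := by
  lift R to ℝ≥0 using ht.trans htR.le
  lift r to ℝ≥0 using hr.le
  lift t to ℝ≥0 using ht
  have hS := hasFPowerSeriesOnBall_shiftCoeff ha hx hr hs
  have hHR := hH.hasFPowerSeriesOnBall (by exact_mod_cast t.coe_nonneg.trans_lt htR)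
  have hrad := hHR.r_le
  rw [hHR.hasFPowerSeriesAt.eq_formalMultilinearSeries_of_eventually hS.hasFPowerSeriesAt hHS]
    at hrad
  have hsum :=
    summable_norm_mul_pow _ ((ENNReal.coe_lt_coe.2 (by exact_mod_cast htR)).trans_le hrad)
  rw [← summable_shiftTerm_prod_iff ha hx t.coe_nonneg,
    summable_shiftTerm_prod_iff_shiftCoeff ha hx t.coe_nonneg (summable_shiftTerm ha hx hr hs)]
  simpa only [norm_ofScalars_shiftCoeff ha hx] using hsum

end Reexpansion

theorem closedBall_subset_ball_union_ball {M δ ε : ℝ} (hε : 0 < ε) (hεM : 2 * ε ≤ M)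
    (hεδ : 3 * ε ≤ δ) :
    closedBall ((M - ε : ℝ) : ℂ) (2 * ε) ⊆ ball 0 M ∪ ball (M : ℂ) δ := by
  intro z hz
  by_cases hzM : ‖z‖ < M
  · exact Or.inl (mem_ball_zero_iff.2 hzM)
  right
  rw [mem_closedBall, Complex.dist_eq, ← sq_le_sq₀ (norm_nonneg _) (by linarith),
    Complex.sq_norm, Complex.normSq_apply] at hz
  rw [not_lt, ← sq_le_sq₀ (by linarith) (norm_nonneg _), Complex.sq_norm,
    Complex.normSq_apply] at hzM
  rw [mem_ball, Complex.dist_eq, ← sq_lt_sq₀ (norm_nonneg _) (by linarith),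
    Complex.sq_norm, Complex.normSq_apply]
  simp only [Complex.sub_re, Complex.sub_im, Complex.ofReal_re, Complex.ofReal_im, sub_zero] at *
  set D := (z.re - M) * (z.re - M) + z.im * z.im
  have hD : 0 ≤ D := add_nonneg (mul_self_nonneg _) (mul_self_nonneg _)
  -- Stewart's theorem for the collinear points `0`, `M - ε`, `M` and the point `z`
  have stewart : (M - ε) * D = M * ((z.re - (M - ε)) * (z.re - (M - ε)) + z.im * z.im)
      - ε * (z.re * z.re + z.im * z.im) + M * (M - ε) * ε := by ring
  have hMD : (M - ε) * D ≤ 3 * M * ε ^ 2 := by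
    rw [stewart]
    nlinarith [mul_le_mul_of_nonneg_left hz (by linarith : 0 ≤ M),
      mul_le_mul_of_nonneg_left hzM hε.le]
  nlinarith [mul_le_mul_of_nonneg_right (by linarith : M / 2 ≤ M - ε) hD,
    mul_self_le_mul_self (by linarith) hεδ, mul_pos (by linarith : 0 < M) (pow_pos hε 2)]

theorem exists_summable_gt_of_analyticOnNhd_ball_union_ball {a : ℕ → ℝ} (ha : ∀ n, 0 ≤ a n)
    {M δ : ℝ} (hM : 0 < M) (hδ : 0 < δ) (hs : Summable fun n => a n * M ^ n) {G : ℂ → ℂ}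
    (hG : AnalyticOnNhd ℂ G (ball 0 M ∪ ball (M : ℂ) δ))
    (hGS : Set.EqOn G (fun z => ∑' n, (a n : ℂ) * z ^ n) (ball 0 M)) :
    ∃ r > M, Summable fun n => a n * r ^ n := by
  set ε := min (M / 2) (δ / 3)
  have hε : 0 < ε := lt_min (by linarith) (by linarith)
  have hεM : ε ≤ M / 2 := min_le_left _ _
  have hεδ : ε ≤ δ / 3 := min_le_right _ _
  have hx : ((M - ε : ℝ) : ℂ) ∈ ball 0 M := by
    rw [mem_ball_zero_iff, Complex.norm_real, Real.norm_of_nonneg (by linarith)]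
    linarith
  refine ⟨M - ε + 3 * ε / 2, by linarith, ?_⟩
  exact summable_of_differentiableOn_closedBall ha (by linarith) hε (by rwa [sub_add_cancel])
    (hG.mono (closedBall_subset_ball_union_ball hε (by linarith) (by linarith))).differentiableOn
    (hGS.eventuallyEq_of_mem (isOpen_ball.mem_nhds hx)) (by linarith) (by linarith)

theorem diverges_at_radius_general (a : ℕ → ℝ) (ha : ∀ n, 0 ≤ a n) (M : ℝ) (hM : 0 < M)
    (hdiv : ∀ r : ℝ, M < r → ¬ Summable fun n => a n * r ^ n)
    (F : ℂ → ℂ) (hF : MeromorphicOn F (Set.univ : Set ℂ))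
    (hagree : ∀ z : ℂ, ‖z‖ < M → F z = ∑' n, (a n : ℂ) * z ^ n) :
    ¬ Summable fun n => a n * M ^ n := by
  intro hsum
  have hsumℂ : Summable fun n => ‖(a n : ℂ)‖ * M ^ n := by
    simpa [abs_of_nonneg (ha _)] using hsum
  have hFM : MeromorphicAt F M := hF M trivial
  have hbound : ∃ᶠ z in 𝓝[≠] (M : ℂ), ‖F z‖ ≤ ∑' n, ‖(a n : ℂ)‖ * M ^ n := by
    have hnear : ∃ᶠ z in 𝓝[≠] (M : ℂ), ‖z‖ < M := by
      simpa [abs_of_pos hM] using frequently_norm_lt_nhdsNE (x := (M : ℂ)) (by simpa using hM.ne')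
    exact hnear.mono fun z hz => hagree z hz ▸ norm_tsum_mul_pow_le hsumℂ hz.le
  set G := toMeromorphicNFAt F M
  obtain ⟨δ, hδ, hGδ⟩ :=
    (hFM.analyticAt_toMeromorphicNFAt_of_frequently_norm_le hbound).exists_ball_analyticOnNhd
  have hGS : Set.EqOn G (fun z => ∑' n, (a n : ℂ) * z ^ n) (ball 0 M) := fun z hz => by
    have hzM : z ≠ M := ne_of_mem_of_not_mem hz (by simp [abs_of_pos hM])
    exact (hFM.eqOn_compl_singleton_toMeromorphicNFAt hzM).symm.trans
      (hagree z (mem_ball_zero_iff.1 hz))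
  have hG : AnalyticOnNhd ℂ G (ball 0 M ∪ ball (M : ℂ) δ) := by
    rintro z (hz | hz)
    · exact (analyticOnNhd_congr isOpen_ball hGS).2
        (analyticOnNhd_tsum_mul_pow (r := ⟨M, hM.le⟩) hsumℂ) z hz
    · exact hGδ z hz
  obtain ⟨r, hMr, hsr⟩ :=
    exists_summable_gt_of_analyticOnNhd_ball_union_ball ha hM hδ hsum hG hGS
  exact hdiv r hMr hsr

/-- **Divergence at the radius for meromorphically extendable nonnegative series.**
If `Σ aₙ zⁿ` has nonnegative real coefficients, radius of convergence `M ∈ (0, ∞)`, and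
its sum extends to a function meromorphic on `ℂ`, then `Σ aₙ Mⁿ = ∞`. -/
theorem diverges_at_radius (a : ℕ → ℝ) (ha : ∀ n, 0 ≤ a n) (M : ℝ) (hM : 0 < M)
    (hconv : ∀ r : ℝ, 0 ≤ r → r < M → Summable fun n => a n * r ^ n)
    (hdiv : ∀ r : ℝ, M < r → ¬ Summable fun n => a n * r ^ n)
    (F : ℂ → ℂ) (hF : MeromorphicOn F (Set.univ : Set ℂ))
    (hagree : ∀ z : ℂ, ‖z‖ < M → F z = ∑' n, (a n : ℂ) * z ^ n) :
    ¬ Summable fun n => a n * M ^ n :=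
  diverges_at_radius_general a ha M hM hdiv F hF hagree
end

section
/- (Combinatorial form of Lemma 2.1) Fix sequences λ with λ_i > 0 and ρ with ρ_i ≥ 0, and suppose there exist c > 0 and m ≥ 1 such that ∏_{i=3}^{ℓ−2} (1 + λ_i/(1+D_i)) ≤ c·ℓ^m for all ℓ ≥ 5. Then there exist constants c_0 > 0 and m' ≥ 1, not depending on k, such that for all integers k ≥ 2, Σ_{ℓ=2}^{k} q_ℓ^{(k)} ≤ c_0 · k^{1+m'} · C_k, where C_k is the weighted Catalan number. -/
open Filter Finset

set_option linter.dupNamespace false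

namespace ReachAux

lemma endH_append (t : List Bool) : ∀ (s : List Bool) (j : ℕ),
    endH j (s ++ t) = endH (endH j s) t := by
  intro s
  induction s with
  | nil => intro j; rfl
  | cons b s ih => intro j; cases b <;> simp [endH, ih]

lemma isDyck_append (t : List Bool) : ∀ (s : List Bool) (j : ℕ),
    isDyck j (s ++ t) = (isDyck j s && isDyck (endH j s) t) := by
  intro s
  induction s with
  | nil => intro j; rfl
  | cons b s ih => intro j; cases b <;> simp [endH, isDyck, ih, Bool.and_assoc]

lemma dwt_append (u v : ℕ → ℝ) (t : List Bool) : ∀ (s : List Bool) (j : ℕ),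
    dwt u v j (s ++ t) = dwt u v j s * dwt u v (endH j s) t := by
  intro s
  induction s with
  | nil => intro j; simp [dwt, endH]
  | cons b s ih => intro j; cases b <;> simp [endH, dwt, ih, mul_assoc]

lemma jump_shift (lam rho : ℕ → ℝ) : ∀ (s : List Bool) (j : ℕ), isJump (j+1) s = true →
    isDyck j s = true ∧ endH (j+1) s = endH j s + 1 ∧
    jwt lam (Dd rho) (j+1) s = dwt (uWt lam rho) (vWt lam rho) j s := by
  intro s
  induction s with
  | nil => intro j _; exact ⟨rfl, rfl, rfl⟩
  | cons b s ih =>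
    intro j hj
    cases b with
    | true =>
      have h := ih (j+1) (by simpa [isJump] using hj)
      refine ⟨h.1, ?_, ?_⟩
      · simpa [endH] using h.2.1
      · simp only [jwt, dwt, h.2.2, uWt]
    | false =>
      simp only [isJump, Bool.and_eq_true, decide_eq_true_eq] at hj
      obtain ⟨h2, hs⟩ := hj
      match j, h2 with
      | (j'+1), _ =>
        have h := ih j' (by simpa using hs)
        refine ⟨?_, ?_, ?_⟩
        · simp [isDyck, h.1]
        · simpa [endH] using h.2.1
        · simp only [jwt, dwt, vWt]
          simp only [Nat.add_sub_cancel]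
          rw [h.2.2]

lemma dwt_pos {u v : ℕ → ℝ} (hu : ∀ j, 0 < u j) (hv : ∀ j, 0 < v j) :
    ∀ (s : List Bool) (j : ℕ), 0 < dwt u v j s := by
  intro s
  induction s with
  | nil => intro j; norm_num [dwt]
  | cons b s ih =>
    intro j
    cases b
    · exact mul_pos (hv _) (ih _)
    · exact mul_pos (hu _) (ih _)

lemma endH_replicate : ∀ n, endH n (List.replicate n false) = 0 := by
  intro n
  induction n with
  | zero => rfl
  | succ n ih => simpa [List.replicate_succ, endH] using ih

lemma isDyck_replicate : ∀ n, isDyck n (List.replicate n false) = true := by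
  intro n
  induction n with
  | zero => rfl
  | succ n ih => simpa [List.replicate_succ, isDyck] using ih

lemma dwt_replicate (u v : ℕ → ℝ) : ∀ n, dwt u v n (List.replicate n false) = ∏ i ∈ Finset.range n, v i := by
  intro n
  induction n with
  | zero => simp [dwt]
  | succ n ih =>
    rw [List.replicate_succ]
    show v (n + 1 - 1) * dwt u v (n + 1 - 1) (List.replicate n false) = _
    rw [Nat.add_sub_cancel, ih, Finset.prod_range_succ, mul_comm]

lemma ofFn_getD {n : ℕ} (l : List Bool) (h : l.length = n) :
    List.ofFn (fun i : Fin n => l.getD i false) = l := by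
  apply List.ext_getElem
  · simp [h]
  · intro i h1 h2
    simp [List.getD_eq_getElem, h2]


def Tl (l : ℕ) (s : List Bool) : List Bool :=
  s ++ (List.replicate (l - 1) false ++ [true, false])

noncomputable def Wl (lam rho : ℕ → ℝ) (l : ℕ) : ℝ :=
  (∏ i ∈ Finset.range (l - 1), vWt lam rho i) * (uWt lam rho 0 * (vWt lam rho 0 * 1))

lemma key (lam rho : ℕ → ℝ) (hu : ∀ j, 0 < uWt lam rho j) (hv : ∀ j, 0 < vWt lam rho j)
    (k l : ℕ) (hsig : 0 ≤ sigmaWt rho l) (hl2 : 2 ≤ l) (hlk : l ≤ k) (hk : 2 ≤ k) :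
    qsum lam rho k l * Wl lam rho l ≤ sigmaWt rho l * Ck lam rho k := by
  set u := uWt lam rho with hu'
  set v := vWt lam rho with hv'
  set N := 2 * k - l - 1 with hN
  set Φ : (Fin N → Bool) → (Fin (2 * k) → Bool) :=
    fun γ i => (Tl l (List.ofFn γ)).getD i false with hΦ
  have hlen : ∀ γ : Fin N → Bool, (Tl l (List.ofFn γ)).length = 2 * k := by
    intro γ; simp only [Tl, List.length_append, List.length_ofFn, List.length_replicate,
      List.length_cons, List.length_nil]; omega
  have hofn : ∀ γ, List.ofFn (Φ γ) = Tl l (List.ofFn γ) := fun γ => ofFn_getD _ (hlen γ)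
  have hinj : Function.Injective Φ := by
    intro a b hab
    have h2 : Tl l (List.ofFn a) = Tl l (List.ofFn b) := by rw [← hofn a, ← hofn b, hab]
    exact List.ofFn_injective (List.append_cancel_right h2)
  set g : (Fin (2 * k) → Bool) → ℝ := fun δ =>
    if isDyck 0 (List.ofFn δ) = true ∧ endH 0 (List.ofFn δ) = 0 then
      dwt u v 0 (List.ofFn δ) else 0 with hg
  have hg0 : ∀ δ, 0 ≤ g δ := by
    intro δ; rw [hg]
    dsimp only
    split
    · exact (dwt_pos hu hv _ _).le
    · exact le_refl 0
  have hCk : Ck lam rho k = ∑ δ : Fin (2 * k) → Bool, g δ := rfl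
  have step1 : ∀ γ : Fin N → Bool,
      (if isJump 1 (List.ofFn γ) = true ∧ endH 1 (List.ofFn γ) = l ∧
          (List.ofFn γ).getLast? = some true then
        jwt lam (Dd rho) 1 (List.ofFn γ) else 0) * Wl lam rho l ≤ g (Φ γ) := by
    intro γ
    by_cases hP : isJump 1 (List.ofFn γ) = true ∧ endH 1 (List.ofFn γ) = l ∧
        (List.ofFn γ).getLast? = some true
    · rw [if_pos hP]
      obtain ⟨hJ, hE, -⟩ := hP
      obtain ⟨hD, hE1, hW⟩ := jump_shift lam rho (List.ofFn γ) 0 hJ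
      have hE1' : endH 1 (List.ofFn γ) = endH 0 (List.ofFn γ) + 1 := hE1
      have hE0 : endH 0 (List.ofFn γ) = l - 1 := by omega
      have hcond : isDyck 0 (List.ofFn (Φ γ)) = true ∧ endH 0 (List.ofFn (Φ γ)) = 0 := by
        rw [hofn γ]
        constructor
        · rw [Tl, isDyck_append, hD, hE0, isDyck_append, isDyck_replicate, endH_replicate]
          rfl
        · rw [Tl, endH_append, hE0, endH_append, endH_replicate]
          rfl
      rw [hg]
      dsimp only
      rw [if_pos hcond, hofn γ, Tl, dwt_append, hE0, dwt_append, dwt_replicate,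
        endH_replicate, hW, Wl]
      have : dwt u v 0 [true, false] = u 0 * (v 0 * 1) := by
        show u 0 * (v (1 - 1) * dwt u v (1 - 1) []) = _
        rfl
      apply le_of_eq
      rw [this, ← hu', ← hv']
    · rw [if_neg hP, zero_mul]
      exact hg0 _
  have step2 : (∑ γ : Fin N → Bool, g (Φ γ)) ≤ ∑ δ : Fin (2 * k) → Bool, g δ := by
    rw [← Finset.sum_image (fun a _ b _ h => hinj h)]
    exact Finset.sum_le_sum_of_subset_of_nonneg (Finset.subset_univ _)
      (fun i _ _ => hg0 i)
  calc qsum lam rho k l * Wl lam rho l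
      = sigmaWt rho l * ∑ γ : Fin N → Bool,
          (if isJump 1 (List.ofFn γ) = true ∧ endH 1 (List.ofFn γ) = l ∧
              (List.ofFn γ).getLast? = some true then
            jwt lam (Dd rho) 1 (List.ofFn γ) else 0) * Wl lam rho l := by
        rw [qsum, ← Finset.sum_mul]; ring
    _ ≤ sigmaWt rho l * ∑ γ : Fin N → Bool, g (Φ γ) := by
        apply mul_le_mul_of_nonneg_left (Finset.sum_le_sum (fun γ _ => step1 γ)) hsig
    _ ≤ sigmaWt rho l * Ck lam rho k := by
        rw [hCk]
        exact mul_le_mul_of_nonneg_left step2 hsig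


lemma ratio_bound (lam rho : ℕ → ℝ) (hlam : ∀ i, 1 ≤ i → 0 < lam i)
    (hrho : ∀ i, 1 ≤ i → 0 ≤ rho i) (c m : ℝ) (hc : 0 < c) (hm : 1 ≤ m)
    (hyp : ∀ l : ℕ, 5 ≤ l →
      (∏ i ∈ Finset.Icc 3 (l - 2), (1 + lam i / (1 + Dd rho i))) ≤ c * (l : ℝ) ^ m) :
    ∃ c₁ : ℝ, 0 < c₁ ∧ ∀ l : ℕ, 2 ≤ l →
      sigmaWt rho l ≤ c₁ * (l : ℝ) ^ m * Wl lam rho l := by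
  have hm0 : 0 ≤ m := le_trans zero_le_one hm
  have hD : ∀ j, 0 ≤ Dd rho j := by
    intro j
    exact Finset.sum_nonneg fun i hi => hrho i (Finset.mem_Icc.1 hi).1
  have hD1 : ∀ j, (0:ℝ) < 1 + Dd rho j := fun j => by linarith [hD j]
  have hLD : ∀ j, 1 ≤ j → (0:ℝ) < 1 + lam j + Dd rho j := fun j hj => by
    linarith [hD j, hlam j hj]
  set a : ℕ → ℝ := fun n => 1 + lam n / (1 + Dd rho n) with ha
  set b : ℕ → ℝ := fun n => 1 / (1 + lam n + Dd rho n) with hb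
  have ha1 : ∀ n, 1 ≤ n → 1 ≤ a n := by
    intro n hn
    have : 0 ≤ lam n / (1 + Dd rho n) := div_nonneg (hlam n hn).le (hD1 n).le
    simp only [ha]; linarith
  have hb0 : ∀ n, 1 ≤ n → 0 < b n := by
    intro n hn
    exact div_pos one_pos (hLD n hn)
  -- the product bound
  set K : ℝ := a 2 * max (c * 2 ^ m) 1 with hK
  have hK0 : 0 < K := mul_pos (lt_of_lt_of_le one_pos (ha1 2 (by norm_num)))
    (lt_of_lt_of_le one_pos (le_max_right _ _))
  have hP : ∀ l : ℕ, 2 ≤ l → (∏ n ∈ Finset.Icc 2 l, a n) ≤ K * (l : ℝ) ^ m := by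
    intro l hl
    have hl1 : (1:ℝ) ≤ (l : ℝ) := by exact_mod_cast le_trans (by norm_num) hl
    have hlm1 : (1:ℝ) ≤ (l : ℝ) ^ m := Real.one_le_rpow hl1 hm0
    have hsplit : (∏ n ∈ Finset.Icc 2 l, a n) = a 2 * ∏ n ∈ Finset.Icc 3 l, a n := by
      rw [← Finset.Ico_add_one_right_eq_Icc, Finset.prod_eq_prod_Ico_succ_bot (by omega), Finset.Ico_add_one_right_eq_Icc]
    rw [hsplit]
    have htail : (∏ n ∈ Finset.Icc 3 l, a n) ≤ max (c * 2 ^ m) 1 * (l : ℝ) ^ m := by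
      rcases Nat.lt_or_ge l 3 with h3 | h3
      · have : Finset.Icc 3 l = ∅ := by
          rw [Finset.Icc_eq_empty_iff]; omega
        rw [this, Finset.prod_empty]
        calc (1:ℝ) ≤ (l:ℝ) ^ m := hlm1
          _ ≤ max (c * 2 ^ m) 1 * (l : ℝ) ^ m := by
              nlinarith [le_max_right (c * 2 ^ m) (1:ℝ)]
      · have h5 : 5 ≤ l + 2 := by omega
        have := hyp (l + 2) h5
        have hl2 : l + 2 - 2 = l := by omega
        rw [hl2] at this
        have hcast : ((l + 2 : ℕ) : ℝ) = (l : ℝ) + 2 := by push_cast; ring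
        rw [hcast] at this
        have h2l : ((l : ℝ) + 2) ^ m ≤ (2 * l : ℝ) ^ m := by
          apply Real.rpow_le_rpow (by positivity) (by exact_mod_cast by omega) hm0
        have h2l' : ((2 : ℝ) * l) ^ m = 2 ^ m * (l:ℝ) ^ m :=
          Real.mul_rpow (by norm_num) (by positivity)
        calc (∏ n ∈ Finset.Icc 3 l, a n) ≤ c * ((l : ℝ) + 2) ^ m := this
          _ ≤ c * (2 ^ m * (l:ℝ) ^ m) := by
              rw [← h2l']; exact mul_le_mul_of_nonneg_left h2l hc.le
          _ = (c * 2 ^ m) * (l:ℝ) ^ m := by ring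
          _ ≤ max (c * 2 ^ m) 1 * (l : ℝ) ^ m := by
              exact mul_le_mul_of_nonneg_right (le_max_left _ _) (by positivity)
    calc a 2 * ∏ n ∈ Finset.Icc 3 l, a n ≤ a 2 * (max (c * 2 ^ m) 1 * (l : ℝ) ^ m) :=
          mul_le_mul_of_nonneg_left htail (le_trans zero_le_one (ha1 2 (by norm_num)))
      _ = K * (l : ℝ) ^ m := by rw [hK]; ring
  -- conclude
  set U : ℝ := uWt lam rho 0 * (vWt lam rho 0 * 1) with hU
  have hU0 : 0 < U := by
    have h1 : 0 < uWt lam rho 0 := div_pos (hlam 1 le_rfl) (hLD 1 le_rfl)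
    have h2 : 0 < vWt lam rho 0 := div_pos one_pos (hLD 2 (by norm_num))
    rw [hU]; nlinarith
  refine ⟨K / ((1 + Dd rho 1) * U), div_pos hK0 (mul_pos (hD1 1) hU0), ?_⟩
  intro l hl
  have hQ : (∏ i ∈ Finset.range (l - 1), vWt lam rho i) = ∏ n ∈ Finset.Icc 2 l, b n := by
    rw [← Finset.Ico_add_one_right_eq_Icc, Finset.prod_Ico_eq_prod_range]
    have : l + 1 - 2 = l - 1 := by omega
    rw [this]
    apply Finset.prod_congr rfl
    intro i _
    simp only [vWt, hb]
    rw [Nat.add_comm 2 i]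
  have hsig : sigmaWt rho l = (1 / (1 + Dd rho 1)) *
      ((∏ n ∈ Finset.Icc 2 l, a n) * (∏ n ∈ Finset.Icc 2 l, b n)) := by
    rw [← Finset.prod_mul_distrib]
    have hcongr : (∏ n ∈ Finset.Icc 2 l, (1:ℝ) / (1 + Dd rho n)) =
        ∏ n ∈ Finset.Icc 2 l, a n * b n := by
      apply Finset.prod_congr rfl
      intro n hn
      have hn1 : 1 ≤ n := by have := (Finset.mem_Icc.1 hn).1; omega
      have h1 := (hD1 n).ne'
      have h2 := (hLD n hn1).ne'
      simp only [ha, hb]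
      field_simp
      ring
    rw [← hcongr, sigmaWt, ← Finset.Ico_add_one_right_eq_Icc,
      Finset.prod_eq_prod_Ico_succ_bot (by omega : 1 < l + 1), Finset.Ico_add_one_right_eq_Icc]
  have hQ0 : 0 ≤ ∏ n ∈ Finset.Icc 2 l, b n := by
    apply Finset.prod_nonneg
    intro n hn
    exact (hb0 n (by have := (Finset.mem_Icc.1 hn).1; omega)).le
  have hWl : Wl lam rho l = (∏ n ∈ Finset.Icc 2 l, b n) * U := by
    rw [Wl, hQ, hU]
  rw [hsig, hWl]
  have hstep : (∏ n ∈ Finset.Icc 2 l, a n) * (∏ n ∈ Finset.Icc 2 l, b n) ≤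
      (K * (l : ℝ) ^ m) * (∏ n ∈ Finset.Icc 2 l, b n) :=
    mul_le_mul_of_nonneg_right (hP l hl) hQ0
  have hD1' := (hD1 1).ne'
  have hU0' := hU0.ne'
  calc 1 / (1 + Dd rho 1) * ((∏ n ∈ Finset.Icc 2 l, a n) * (∏ n ∈ Finset.Icc 2 l, b n))
      ≤ 1 / (1 + Dd rho 1) * ((K * (l : ℝ) ^ m) * (∏ n ∈ Finset.Icc 2 l, b n)) := by
        exact mul_le_mul_of_nonneg_left hstep (one_div_nonneg.2 (hD1 1).le)
    _ = K / ((1 + Dd rho 1) * U) * (l : ℝ) ^ m * ((∏ n ∈ Finset.Icc 2 l, b n) * U) := by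
        field_simp

end ReachAux

open ReachAux

/-- **Combinatorial form of Lemma 2.1.** Under the product growth hypothesis, there are
constants `c₀ > 0` and `m' ≥ 1`, independent of `k`, with
`Σ_{ℓ=2}^{k} q_ℓ^{(k)} ≤ c₀ k^{1+m'} C_k` for all `k ≥ 2`. -/
theorem reach_le_renewal (lam rho : ℕ → ℝ)
    (hlam : ∀ i, 1 ≤ i → 0 < lam i) (hrho : ∀ i, 1 ≤ i → 0 ≤ rho i)
    (hyp : ∃ c : ℝ, 0 < c ∧ ∃ m : ℝ, 1 ≤ m ∧ ∀ l : ℕ, 5 ≤ l →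
      (∏ i ∈ Finset.Icc 3 (l - 2), (1 + lam i / (1 + Dd rho i))) ≤ c * (l : ℝ) ^ m) :
    ∃ c₀ : ℝ, 0 < c₀ ∧ ∃ m' : ℝ, 1 ≤ m' ∧ ∀ k : ℕ, 2 ≤ k →
      (∑ l ∈ Finset.Icc 2 k, qsum lam rho k l) ≤
        c₀ * (k : ℝ) ^ (1 + m') * Ck lam rho k := by
  obtain ⟨c, hc, m, hm, hyp⟩ := hyp
  have hm0 : 0 ≤ m := le_trans zero_le_one hm
  have hD : ∀ j, 0 ≤ Dd rho j := by
    intro j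
    exact Finset.sum_nonneg fun i hi => hrho i (Finset.mem_Icc.1 hi).1
  have hD1 : ∀ j, (0:ℝ) < 1 + Dd rho j := fun j => by linarith [hD j]
  have hLD : ∀ j, 1 ≤ j → (0:ℝ) < 1 + lam j + Dd rho j := fun j hj => by
    linarith [hD j, hlam j hj]
  have hu : ∀ j, 0 < uWt lam rho j := fun j =>
    div_pos (hlam (j + 1) (by omega)) (hLD (j + 1) (by omega))
  have hv : ∀ j, 0 < vWt lam rho j := fun j =>
    div_pos one_pos (hLD (j + 2) (by omega))
  have hsig : ∀ l, 0 ≤ sigmaWt rho l := by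
    intro l
    exact Finset.prod_nonneg fun n _ => (one_div_nonneg.2 (hD1 n).le)
  have hW : ∀ l, 0 < Wl lam rho l := by
    intro l
    have h1 : 0 < ∏ i ∈ Finset.range (l - 1), vWt lam rho i :=
      Finset.prod_pos fun i _ => hv i
    rw [Wl]
    exact mul_pos h1 (mul_pos (hu 0) (mul_pos (hv 0) one_pos))
  have hCk0 : ∀ k, 0 ≤ Ck lam rho k := by
    intro k
    apply Finset.sum_nonneg
    intro γ _
    split
    · exact (dwt_pos hu hv _ _).le
    · exact le_refl 0
  obtain ⟨c₁, hc₁, hrat⟩ := ratio_bound lam rho hlam hrho c m hc hm hyp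
  refine ⟨c₁, hc₁, m, hm, ?_⟩
  intro k hk
  have hk0 : (0:ℝ) < (k:ℝ) := by exact_mod_cast lt_of_lt_of_le (by norm_num) hk
  have hterm : ∀ l ∈ Finset.Icc 2 k, qsum lam rho k l ≤ c₁ * (l:ℝ) ^ m * Ck lam rho k := by
    intro l hl
    rw [Finset.mem_Icc] at hl
    apply le_of_mul_le_mul_right _ (hW l)
    calc qsum lam rho k l * Wl lam rho l ≤ sigmaWt rho l * Ck lam rho k :=
          key lam rho hu hv k l (hsig l) hl.1 hl.2 hk
      _ ≤ (c₁ * (l:ℝ) ^ m * Wl lam rho l) * Ck lam rho k :=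
          mul_le_mul_of_nonneg_right (hrat l hl.1) (hCk0 k)
      _ = c₁ * (l:ℝ) ^ m * Ck lam rho k * Wl lam rho l := by ring
  have hbound : ∀ l ∈ Finset.Icc 2 k, c₁ * (l:ℝ) ^ m * Ck lam rho k ≤
      c₁ * (k:ℝ) ^ m * Ck lam rho k := by
    intro l hl
    rw [Finset.mem_Icc] at hl
    have hlk : ((l:ℝ)) ^ m ≤ (k:ℝ) ^ m :=
      Real.rpow_le_rpow (by positivity) (by exact_mod_cast hl.2) hm0
    have h1 : (0:ℝ) ≤ (k:ℝ) ^ m := Real.rpow_nonneg hk0.le m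
    nlinarith [hCk0 k, hc₁.le, mul_le_mul_of_nonneg_left hlk hc₁.le,
      mul_le_mul_of_nonneg_right (mul_le_mul_of_nonneg_left hlk hc₁.le) (hCk0 k)]
  calc (∑ l ∈ Finset.Icc 2 k, qsum lam rho k l)
      ≤ ∑ l ∈ Finset.Icc 2 k, c₁ * (l:ℝ) ^ m * Ck lam rho k :=
        Finset.sum_le_sum hterm
    _ ≤ ∑ l ∈ Finset.Icc 2 k, c₁ * (k:ℝ) ^ m * Ck lam rho k :=
        Finset.sum_le_sum hbound
    _ = ((k - 1 : ℕ) : ℝ) * (c₁ * (k:ℝ) ^ m * Ck lam rho k) := by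
        rw [Finset.sum_const, Nat.card_Icc, nsmul_eq_mul]
        have h21 : k + 1 - 2 = k - 1 := by omega
        rw [h21]
    _ ≤ (k : ℝ) * (c₁ * (k:ℝ) ^ m * Ck lam rho k) := by
        refine mul_le_mul_of_nonneg_right ?_ ?_
        · exact_mod_cast Nat.sub_le k 1
        · exact mul_nonneg (mul_nonneg hc₁.le (Real.rpow_nonneg hk0.le m)) (hCk0 k)
    _ = c₁ * (k : ℝ) ^ (1 + m) * Ck lam rho k := by
        rw [Real.rpow_add hk0, Real.rpow_one]
        ring
end
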